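/- arXiv:1212.6074 — 9 statements merged into one kernel-verified Lean document; each statement's English description precedes it below -/
import Mathlib

section
/- Let M, N, K be positive integers with K ≥ 2 and N ≥ (K+1)M−1. Then for every integer i with 2 ≤ i ≤ K, every real D with 0 ≤ D ≤ M, and every real r with 0 ≤ r ≤ D, one has d^{D}_{M,N}(r) ≤ d^{iD}_{iM,N}(i·r). -/
/-- The index `l` of the interval of average dimensions per channel use `D`
to which `D` belongs: the smallest `l` with `D ≤ (MN − l(l+1))/(N+M−1−2l)`. -/
noncomputable def lIdx (M N : ℕ) (D : ℝ) : ℕ :=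
  sInf {l : ℕ |
    D ≤ ((M : ℝ) * (N : ℝ) - (l : ℝ) * ((l : ℝ) + 1)) /
        ((N : ℝ) + (M : ℝ) - 1 - 2 * (l : ℝ))}

/-- The upper bound `d^{D}_{M,N}(r)` on the DMT of infinite constellations with
`D` average dimensions per channel use, in a point-to-point channel with `M`
transmit and `N` receive antennas.  It vanishes for `r ≥ D` or `D = 0`, and for
`0 ≤ r < D` it is the straight line `((M−l)(N−l)/(D−l))·(D−r)` where `l = lIdx M N D`
is determined by the interval of `D`. -/
noncomputable def dIC (M N : ℕ) (D r : ℝ) : ℝ :=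
  if D ≤ 0 ∨ D ≤ r then 0
  else
    (((M : ℝ) - (lIdx M N D : ℝ)) * ((N : ℝ) - (lIdx M N D : ℝ)) /
        (D - (lIdx M N D : ℝ))) * (D - r)

/-- The optimal point-to-point DMT `d^{FC}_{M,N}(r)` of finite constellations:
the piecewise linear function through the points `(l, (M−l)(N−l))`. -/
noncomputable def dFC (M N : ℕ) (r : ℝ) : ℝ :=
  ((M : ℝ) - (⌊r⌋ : ℝ)) * ((N : ℝ) - (⌊r⌋ : ℝ))
    + (r - (⌊r⌋ : ℝ)) *
      (((M : ℝ) - (⌊r⌋ : ℝ) - 1) * ((N : ℝ) - (⌊r⌋ : ℝ) - 1)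
        - ((M : ℝ) - (⌊r⌋ : ℝ)) * ((N : ℝ) - (⌊r⌋ : ℝ)))

/-- The optimal symmetric multiple-access DMT `d^{FC}_{K,M,N}(r)` of finite
constellations: it equals `d^{FC}_{M,N}(r)` for `r ≤ min(N/(K+1), M)` and
`d^{FC}_{KM,N}(K·r)` afterwards. -/
noncomputable def dFCmac (K M N : ℕ) (r : ℝ) : ℝ :=
  if r ≤ min ((N : ℝ) / ((K : ℝ) + 1)) (M : ℝ) then dFC M N r
  else dFC (K * M) N ((K : ℝ) * r)

set_option maxHeartbeats 1000000 in


noncomputable def fR (M N : ℕ) (l : ℕ) : ℝ :=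
  ((M : ℝ) * (N : ℝ) - (l : ℝ) * ((l : ℝ) + 1)) /
    ((N : ℝ) + (M : ℝ) - 1 - 2 * (l : ℝ))

lemma lIdx_eq (M N : ℕ) (D : ℝ) : lIdx M N D = sInf {l : ℕ | D ≤ fR M N l} := rfl

noncomputable def cc (M N : ℕ) (D : ℝ) (j : ℕ) : ℝ :=
  ((M : ℝ) - (j : ℝ)) * ((N : ℝ) - (j : ℝ)) / (D - (j : ℝ))

lemma lIdx_spec (M N : ℕ) (hM : 1 ≤ M) (hMN : M ≤ N) (D : ℝ) (hDM : D ≤ M) :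
    D ≤ fR M N (lIdx M N D) ∧ lIdx M N D + 1 ≤ M := by
  have hMN' : (M : ℝ) ≤ N := by exact_mod_cast hMN
  have hM' : (1 : ℝ) ≤ M := by exact_mod_cast hM
  have hmem : M - 1 ∈ {l : ℕ | D ≤ fR M N l} := by
    simp only [Set.mem_setOf_eq, fR]
    have hc : ((M - 1 : ℕ) : ℝ) = (M : ℝ) - 1 := by push_cast [hM]; ring
    rw [hc]
    have hden : 0 < (N : ℝ) + M - 1 - 2 * ((M : ℝ) - 1) := by linarith
    rw [le_div_iff₀ hden]
    nlinarith [mul_le_mul_of_nonneg_right hDM hden.le]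
  refine ⟨Nat.sInf_mem (Set.nonempty_of_mem hmem), ?_⟩
  have := Nat.sInf_le hmem
  rw [← lIdx_eq] at this
  omega

lemma lIdx_lt_D (M N : ℕ) (hM : 1 ≤ M) (hMN : M ≤ N) (D : ℝ)
    (hD0 : 0 < D) (hDM : D ≤ M) : (lIdx M N D : ℝ) < D := by
  set l := lIdx M N D with hl
  have hMN' : (M : ℝ) ≤ N := by exact_mod_cast hMN
  rcases Nat.eq_zero_or_pos l with h0 | hpos
  · rw [h0]; simpa using hD0
  · have hlM : l + 1 ≤ M := (lIdx_spec M N hM hMN D hDM).2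
    have hnotmem : l - 1 ∉ {l : ℕ | D ≤ fR M N l} := by
      apply Nat.notMem_of_lt_sInf
      rw [← lIdx_eq, ← hl]
      omega
    simp only [Set.mem_setOf_eq, not_le, fR] at hnotmem
    have hcast : ((l - 1 : ℕ) : ℝ) = (l : ℝ) - 1 := by push_cast [hpos]; ring
    rw [hcast] at hnotmem
    have hlM' : (l : ℝ) + 1 ≤ M := by exact_mod_cast hlM
    have hden : 0 < (N : ℝ) + M - 1 - 2 * ((l : ℝ) - 1) := by linarith
    have hle : (l : ℝ) ≤ ((M : ℝ) * N - ((l : ℝ) - 1) * (((l : ℝ) - 1) + 1)) /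
        ((N : ℝ) + M - 1 - 2 * ((l : ℝ) - 1)) := by
      rw [le_div_iff₀ hden]
      nlinarith [mul_nonneg (by linarith : (0:ℝ) ≤ (M : ℝ) - l)
        (by linarith : (0:ℝ) ≤ (N : ℝ) - l)]
    linarith

lemma f_step (M N : ℕ) (hMN : M ≤ N) (j : ℕ) (hj : (j : ℝ) + 2 ≤ M) :
    fR M N j ≤ fR M N (j + 1) := by
  have hMN' : (M : ℝ) ≤ N := by exact_mod_cast hMN
  unfold fR
  have hc : ((j + 1 : ℕ) : ℝ) = (j : ℝ) + 1 := by push_cast; ring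
  rw [hc]
  have hd1 : 0 < (N : ℝ) + M - 1 - 2 * (j : ℝ) := by linarith
  have hd2 : 0 < (N : ℝ) + M - 1 - 2 * ((j : ℝ) + 1) := by linarith
  rw [div_le_div_iff₀ hd1 hd2]
  nlinarith [mul_nonneg (by linarith : (0:ℝ) ≤ (M : ℝ) - 1 - j)
    (by linarith : (0:ℝ) ≤ (N : ℝ) - 1 - j)]

lemma f_mono (M N : ℕ) (hMN : M ≤ N) (j k : ℕ) (hjk : j ≤ k) (hk : k + 1 ≤ M) :
    fR M N j ≤ fR M N k := by
  induction k, hjk using Nat.le_induction with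
  | base => exact le_refl _
  | succ n hn ih =>
      have h1 : (n : ℝ) + 2 ≤ M := by exact_mod_cast hk
      exact le_trans (ih (by omega)) (f_step M N hMN n h1)

lemma cc_step_up (M N : ℕ) (hMN : M ≤ N) (D : ℝ) (j : ℕ)
    (hj1 : (j : ℝ) + 1 < D) (hDM : D ≤ (M : ℝ)) (hf : D ≤ fR M N j) :
    cc M N D j ≤ cc M N D (j + 1) := by
  have hMN' : (M : ℝ) ≤ N := by exact_mod_cast hMN
  have hjM : (j : ℝ) + 1 < M := lt_of_lt_of_le hj1 hDM
  have hden : 0 < (N : ℝ) + M - 1 - 2 * (j : ℝ) := by linarith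
  rw [fR, le_div_iff₀ hden] at hf
  unfold cc
  have hc : ((j + 1 : ℕ) : ℝ) = (j : ℝ) + 1 := by push_cast; ring
  rw [hc]
  have h1 : 0 < D - (j : ℝ) := by linarith
  have h2 : 0 < D - ((j : ℝ) + 1) := by linarith
  rw [div_le_div_iff₀ h1 h2]
  nlinarith [hf]

lemma cc_step_down (M N : ℕ) (hMN : M ≤ N) (D : ℝ) (j : ℕ)
    (hj1 : (j : ℝ) + 1 < D) (hDM : D ≤ (M : ℝ)) (hf : fR M N j ≤ D) :
    cc M N D (j + 1) ≤ cc M N D j := by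
  have hMN' : (M : ℝ) ≤ N := by exact_mod_cast hMN
  have hjM : (j : ℝ) + 1 < M := lt_of_lt_of_le hj1 hDM
  have hden : 0 < (N : ℝ) + M - 1 - 2 * (j : ℝ) := by linarith
  rw [fR, div_le_iff₀ hden] at hf
  unfold cc
  have hc : ((j + 1 : ℕ) : ℝ) = (j : ℝ) + 1 := by push_cast; ring
  rw [hc]
  have h1 : 0 < D - (j : ℝ) := by linarith
  have h2 : 0 < D - ((j : ℝ) + 1) := by linarith
  rw [div_le_div_iff₀ h2 h1]
  nlinarith [hf]

lemma cc_min (M N : ℕ) (hM : 1 ≤ M) (hMN : M ≤ N) (D : ℝ) (hD0 : 0 < D)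
    (hDM : D ≤ (M : ℝ)) (j : ℕ) (hj : (j : ℝ) < D) :
    cc M N D (lIdx M N D) ≤ cc M N D j := by
  obtain ⟨hmem, hlM⟩ := lIdx_spec M N hM hMN D hDM
  have hlD : (lIdx M N D : ℝ) < D := lIdx_lt_D M N hM hMN D hD0 hDM
  rcases le_or_gt (lIdx M N D) j with h | h
  · revert hj
    induction j, h using Nat.le_induction with
    | base => intro _; exact le_refl _
    | succ n hln ih =>
        intro hj
        have hc : ((n + 1 : ℕ) : ℝ) = (n : ℝ) + 1 := by push_cast; ring
        rw [hc] at hj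
        have hnM1 : n + 1 ≤ M := by
          have h2 : (n : ℝ) + 1 < (M : ℝ) := lt_of_lt_of_le hj hDM
          have h3 : ((n + 1 : ℕ) : ℝ) < (M : ℝ) := by rw [hc]; exact h2
          have h4 : n + 1 < M := by exact_mod_cast h3
          omega
        have hfn : D ≤ fR M N n := le_trans hmem (f_mono M N hMN _ n hln hnM1)
        exact le_trans (ih (by linarith)) (cc_step_up M N hMN D n hj hDM hfn)
  · suffices h' : ∀ k jj, jj + k = lIdx M N D → cc M N D (lIdx M N D) ≤ cc M N D jj by
      exact h' (lIdx M N D - j) j (by omega)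
    intro k
    induction k with
    | zero =>
        intro jj hjj
        have : jj = lIdx M N D := by omega
        rw [this]
    | succ n ih =>
        intro jj hjj
        have h1 : cc M N D (lIdx M N D) ≤ cc M N D (jj + 1) := ih (jj + 1) (by omega)
        have hjl : jj < lIdx M N D := by omega
        have hnot : jj ∉ {l : ℕ | D ≤ fR M N l} := by
          apply Nat.notMem_of_lt_sInf
          rw [← lIdx_eq]
          exact hjl
        simp only [Set.mem_setOf_eq, not_le] at hnot
        have hj1D : (jj : ℝ) + 1 < D := by
          have h2 : ((jj + 1 : ℕ) : ℝ) ≤ ((lIdx M N D : ℕ) : ℝ) := by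
            exact_mod_cast Nat.succ_le_of_lt hjl
          push_cast at h2
          linarith
        exact le_trans h1 (cc_step_down M N hMN D jj hj1D hDM hnot.le)


lemma key_lemma (M N i : ℕ) (hM : 1 ≤ M) (hi : 2 ≤ i) (hN1 : (i + 1) * M ≤ N + 1)
    (D : ℝ) (hDM : D ≤ M) (l' : ℕ) (hl' : (l' : ℝ) < (i : ℝ) * D) :
    cc M N D (l' / i) ≤ (i : ℝ) * cc (i * M) N ((i : ℝ) * D) l' := by
  have hi' : (2 : ℝ) ≤ i := by exact_mod_cast hi
  have hM' : (1 : ℝ) ≤ M := by exact_mod_cast hM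
  have hN1' : ((i : ℝ) + 1) * M ≤ (N : ℝ) + 1 := by exact_mod_cast hN1
  set j := l' / i with hj
  set s := l' % i with hs
  have hsplit : i * j + s = l' := Nat.div_add_mod l' i
  have hsi : s < i := Nat.mod_lt _ (by omega)
  have hexp : (l' : ℝ) = (i : ℝ) * j + s := by exact_mod_cast hsplit.symm
  have hs0 : (0 : ℝ) ≤ s := by positivity
  have hsi' : (s : ℝ) + 1 ≤ i := by exact_mod_cast hsi
  have hjD : (j : ℝ) < D := by
    have h1 : (i : ℝ) * j ≤ l' := by
      rw [hexp]; linarith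
    have h2 : (i : ℝ) * j < (i : ℝ) * D := lt_of_le_of_lt h1 hl'
    exact lt_of_mul_lt_mul_left h2 (by linarith)
  have hjM : (j : ℝ) + 1 ≤ M := by
    have h1 : (j : ℝ) < M := lt_of_lt_of_le hjD hDM
    have h2 : j < M := by exact_mod_cast h1
    exact_mod_cast h2
  have ht : (0 : ℝ) < D - j := by linarith
  have h2 : (0 : ℝ) < (i : ℝ) * D - l' := by linarith
  have hNM : (M : ℝ) ≤ N := by
    have h3 := mul_le_mul_of_nonneg_right (show (3:ℝ) ≤ (i:ℝ) + 1 by linarith)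
      (show (0:ℝ) ≤ M by linarith)
    linarith
  unfold cc
  rw [← mul_div_assoc, div_le_div_iff₀ ht h2]
  push_cast
  rw [hexp]
  -- abbreviations: a = M - j, t = D - j, n = N - j, m = N - (i*j+s)
  have hia : (0 : ℝ) ≤ (i : ℝ) * ((M : ℝ) - j) - s := by
    have h4 := mul_le_mul_of_nonneg_left (show (1:ℝ) ≤ (M:ℝ) - j by linarith)
      (show (0:ℝ) ≤ (i:ℝ) by linarith)
    linarith
  have hm : (0 : ℝ) ≤ (i : ℝ) * ((N : ℝ) - ((i : ℝ) * j + s)) - ((N : ℝ) - j) := by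
    have A1 : (0 : ℝ) ≤ ((i : ℝ) - 1) * ((N : ℝ) + 1 - ((i : ℝ) + 1) * M) :=
      mul_nonneg (by linarith) (by linarith)
    have A2 : (0 : ℝ) ≤ ((i : ℝ) * i - 1) * ((M : ℝ) - 1 - j) :=
      mul_nonneg (by nlinarith) (by linarith)
    have A3 : (0 : ℝ) ≤ (i : ℝ) * ((i : ℝ) - 1 - s) :=
      mul_nonneg (by linarith) (by linarith)
    nlinarith [A1, A2, A3]
  have hA1 : (0 : ℝ) ≤ (((M : ℝ) - j) * (D - j)) *
      (((i : ℝ) * ((M : ℝ) - j) - s) *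
        ((i : ℝ) * ((N : ℝ) - ((i : ℝ) * j + s)) - ((N : ℝ) - j))) :=
    mul_nonneg (mul_nonneg (by linarith) ht.le) (mul_nonneg hia hm)
  have hA2 : (0 : ℝ) ≤ ((M : ℝ) - j) * s * ((N : ℝ) - j) * (((M : ℝ) - j) - (D - j)) :=
    mul_nonneg (mul_nonneg (mul_nonneg (by linarith) hs0) (by linarith)) (by linarith)
  have hApos : (0 : ℝ) ≤ ((M : ℝ) - j) *
      ((i : ℝ) * ((i : ℝ) * M - ((i : ℝ) * j + s)) * ((N : ℝ) - ((i : ℝ) * j + s)) * (D - j)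
        - ((M : ℝ) - j) * ((N : ℝ) - j) * ((i : ℝ) * D - ((i : ℝ) * j + s))) := by
    have hid : ((M : ℝ) - j) *
        ((i : ℝ) * ((i : ℝ) * M - ((i : ℝ) * j + s)) * ((N : ℝ) - ((i : ℝ) * j + s)) * (D - j)
          - ((M : ℝ) - j) * ((N : ℝ) - j) * ((i : ℝ) * D - ((i : ℝ) * j + s))) =
        (((M : ℝ) - j) * (D - j)) *
          (((i : ℝ) * ((M : ℝ) - j) - s) *
            ((i : ℝ) * ((N : ℝ) - ((i : ℝ) * j + s)) - ((N : ℝ) - j)))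
        + ((M : ℝ) - j) * s * ((N : ℝ) - j) * (((M : ℝ) - j) - (D - j)) := by ring
    rw [hid]
    linarith
  have hfin := (mul_nonneg_iff_of_pos_left (show (0:ℝ) < (M : ℝ) - j by linarith)).mp hApos
  linarith [hfin]
theorem stmt2 (M N K : ℕ) (hM : 0 < M) (hN : 0 < N) (hK : 2 ≤ K)
    (hNK : (K + 1) * M - 1 ≤ N) (i : ℕ) (hi2 : 2 ≤ i) (hiK : i ≤ K)
    (D : ℝ) (hD0 : 0 ≤ D) (hDM : D ≤ (M : ℝ))
    (r : ℝ) (hr0 : 0 ≤ r) (hrD : r ≤ D) :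
    dIC M N D r ≤ dIC (i * M) N ((i : ℝ) * D) ((i : ℝ) * r) := by
  have hi0 : (0 : ℝ) ≤ i := Nat.cast_nonneg i
  by_cases h : D ≤ 0 ∨ D ≤ r
  · have h2 : (i : ℝ) * D ≤ 0 ∨ (i : ℝ) * D ≤ (i : ℝ) * r := by
      rcases h with h | h
      · exact Or.inl (mul_nonpos_of_nonneg_of_nonpos hi0 h)
      · exact Or.inr (mul_le_mul_of_nonneg_left h hi0)
    rw [dIC, if_pos h, dIC, if_pos h2]
  · push_neg at h
    obtain ⟨hD0', hrD'⟩ := h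
    have hipos : (0 : ℝ) < i := by exact_mod_cast (by omega : 0 < i)
    have hDipos : 0 < (i : ℝ) * D := mul_pos hipos hD0'
    have h2 : ¬ ((i : ℝ) * D ≤ 0 ∨ (i : ℝ) * D ≤ (i : ℝ) * r) := by
      push_neg
      exact ⟨hDipos, (mul_lt_mul_iff_right₀ hipos).2 hrD'⟩
    rw [dIC, if_neg (by push_neg; exact ⟨hD0', hrD'⟩), dIC, if_neg h2]
    -- nat facts
    have h1n : (i + 1) * M ≤ (K + 1) * M := Nat.mul_le_mul_right M (by omega)
    have h2n : (K + 1) * M ≤ N + 1 := Nat.sub_le_iff_le_add.mp hNK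
    have hN1 : (i + 1) * M ≤ N + 1 := le_trans h1n h2n
    have h3n : 3 * M ≤ (i + 1) * M := Nat.mul_le_mul_right M (by omega)
    have h4n : 3 * M ≤ N + 1 := le_trans h3n hN1
    have hMN : M ≤ N := by omega
    have hMN' : i * M ≤ N := by
      have h5 : i * M + M ≤ N + 1 := by rw [Nat.succ_mul] at hN1; exact hN1
      have h6 : i * M + 1 ≤ i * M + M := Nat.add_le_add_left hM _
      exact Nat.le_of_succ_le_succ (le_trans h6 h5)
    have hMi : 1 ≤ i * M := Nat.mul_pos (by omega) hM
    have hcastiM : ((i * M : ℕ) : ℝ) = (i : ℝ) * M := by push_cast; ring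
    have hiDM : (i : ℝ) * D ≤ ((i * M : ℕ) : ℝ) := by
      rw [hcastiM]
      exact mul_le_mul_of_nonneg_left hDM hi0
    set l' := lIdx (i * M) N ((i : ℝ) * D) with hl'def
    have hl'D : (l' : ℝ) < (i : ℝ) * D :=
      lIdx_lt_D (i * M) N hMi hMN' ((i : ℝ) * D) hDipos hiDM
    have hjl : ((l' / i : ℕ) : ℝ) * i ≤ (l' : ℝ) := by
      exact_mod_cast Nat.div_mul_le_self l' i
    have hjD : ((l' / i : ℕ) : ℝ) < D := by
      have h7 : ((l' / i : ℕ) : ℝ) * i < D * i := by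
        calc ((l' / i : ℕ) : ℝ) * i ≤ (l' : ℝ) := hjl
          _ < (i : ℝ) * D := hl'D
          _ = D * i := by ring
      exact lt_of_mul_lt_mul_right h7 hi0
    have hmin := cc_min M N hM hMN D hD0' hDM (l' / i) hjD
    have hkey := key_lemma M N i hM hi2 hN1 D hDM l' hl'D
    have hmain : cc M N D (lIdx M N D) ≤ (i : ℝ) * cc (i * M) N ((i : ℝ) * D) l' :=
      le_trans hmin hkey
    have hfin := mul_le_mul_of_nonneg_right hmain (by linarith : (0 : ℝ) ≤ D - r)
    calc cc M N D (lIdx M N D) * (D - r)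
        ≤ ((i : ℝ) * cc (i * M) N ((i : ℝ) * D) l') * (D - r) := hfin
      _ = cc (i * M) N ((i : ℝ) * D) l' * ((i : ℝ) * D - (i : ℝ) * r) := by ring
end

section
/- Let M, N, K be positive integers with K ≥ 3 and N < (K+1)M−1, and set L = min(N, KM). Then for every integer i with 2 ≤ i ≤ K−1, every real D with 0 ≤ D ≤ L/K, and every real r with 0 ≤ r ≤ D, one has d^{D}_{M,N}(r) ≤ d^{iD}_{iM,N}(i·r). -/
/-- `lIdx M N D` is smaller than `D`, and it minimizes
`(M−j)(N−j)/(D−j)` over natural numbers `j < D`. -/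
lemma lIdx_spec_s3 (M N : ℕ) (D : ℝ) (hD : 0 < D) (hDM : D ≤ (M:ℝ)) (hDN : D ≤ (N:ℝ)) :
    ((lIdx M N D : ℝ) < D) ∧
    ∀ j : ℕ, (j : ℝ) < D →
      ((M:ℝ) - (lIdx M N D : ℝ)) * ((N:ℝ) - (lIdx M N D : ℝ)) / (D - (lIdx M N D : ℝ)) ≤
        ((M:ℝ) - (j:ℝ)) * ((N:ℝ) - (j:ℝ)) / (D - (j:ℝ)) := by
  classical
  set S : Set ℕ := {l : ℕ |
    D ≤ ((M : ℝ) * (N : ℝ) - (l : ℝ) * ((l : ℝ) + 1)) /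
        ((N : ℝ) + (M : ℝ) - 1 - 2 * (l : ℝ))} with hS
  have hlIdx : lIdx M N D = sInf S := rfl
  set l₁ : ℕ := ⌈D⌉₊ - 1 with hl₁def
  have hc1 : 1 ≤ ⌈D⌉₊ := Nat.one_le_ceil_iff.mpr hD
  have hcM : ⌈D⌉₊ ≤ M := Nat.ceil_le.mpr hDM
  have hcN : ⌈D⌉₊ ≤ N := Nat.ceil_le.mpr hDN
  have hl₁succ : l₁ + 1 = ⌈D⌉₊ := by omega
  have hl₁lt : (l₁ : ℝ) < D := by
    have h1 : (⌈D⌉₊ : ℝ) < D + 1 := Nat.ceil_lt_add_one hD.le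
    have h2 : ((l₁ : ℕ) : ℝ) + 1 = (⌈D⌉₊ : ℝ) := by exact_mod_cast congrArg (Nat.cast (R := ℝ)) hl₁succ
    linarith
  have hDl₁ : D ≤ (l₁ : ℝ) + 1 := by
    have h2 : ((l₁ : ℕ) : ℝ) + 1 = (⌈D⌉₊ : ℝ) := by exact_mod_cast congrArg (Nat.cast (R := ℝ)) hl₁succ
    rw [h2]; exact Nat.le_ceil D
  have hl₁M : (l₁ : ℝ) + 1 ≤ (M : ℝ) := by
    have : l₁ + 1 ≤ M := by omega
    exact_mod_cast this
  have hl₁N : (l₁ : ℝ) + 1 ≤ (N : ℝ) := by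
    have : l₁ + 1 ≤ N := by omega
    exact_mod_cast this
  -- membership of l₁ in S
  have hmem₁ : l₁ ∈ S := by
    have hden : (0:ℝ) < (N : ℝ) + (M : ℝ) - 1 - 2 * (l₁ : ℝ) := by linarith
    rw [hS, Set.mem_setOf_eq, le_div_iff₀ hden]
    nlinarith [mul_nonneg (by linarith : (0:ℝ) ≤ (M:ℝ) - ((l₁:ℝ)+1)) (by linarith : (0:ℝ) ≤ (N:ℝ) - ((l₁:ℝ)+1)),
      mul_le_mul_of_nonneg_right hDl₁ hden.le]
  set l : ℕ := lIdx M N D with hldef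
  have hlle : l ≤ l₁ := Nat.sInf_le hmem₁
  have hlS : l ∈ S := Nat.sInf_mem ⟨l₁, hmem₁⟩
  have hlD : (l : ℝ) < D := by
    have : (l : ℝ) ≤ (l₁ : ℝ) := by exact_mod_cast hlle
    linarith
  -- basic bounds for any natural j < D
  have hjM : ∀ j : ℕ, (j : ℝ) < D → (j : ℝ) + 1 ≤ (M : ℝ) := by
    intro j hj
    have hjM' : j < M := by exact_mod_cast hj.trans_le hDM
    exact_mod_cast hjM'
  have hjN : ∀ j : ℕ, (j : ℝ) < D → (j : ℝ) + 1 ≤ (N : ℝ) := by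
    intro j hj
    have hjN' : j < N := by exact_mod_cast hj.trans_le hDN
    exact_mod_cast hjN'
  have hden : ∀ j : ℕ, (j : ℝ) < D → (0:ℝ) < (N : ℝ) + (M : ℝ) - 1 - 2 * (j : ℝ) := by
    intro j hj
    have := hjM j hj; have := hjN j hj; linarith
  -- g l ≥ 0
  have gl : (0:ℝ) ≤ ((M:ℝ) - l) * ((N:ℝ) - l) - ((M:ℝ) + (N:ℝ) - 1 - 2 * l) * (D - l) := by
    have hd := hden l hlD
    have := (le_div_iff₀ hd).mp hlS
    nlinarith [this]
  -- g m ≤ 0 for m < l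
  have hgm : ∀ m : ℕ, m < l →
      ((M:ℝ) - m) * ((N:ℝ) - m) - ((M:ℝ) + (N:ℝ) - 1 - 2 * m) * (D - m) ≤ 0 := by
    intro m hm
    have hmS : m ∉ S := Nat.notMem_of_lt_sInf (by rw [← hlIdx]; exact hm)
    have hmD : (m : ℝ) < D := by
      have : (m : ℝ) ≤ (l : ℝ) := by exact_mod_cast hm.le
      linarith
    have hd := hden m hmD
    have hlt : ((M : ℝ) * (N : ℝ) - (m : ℝ) * ((m : ℝ) + 1)) /
        ((N : ℝ) + (M : ℝ) - 1 - 2 * (m : ℝ)) < D := by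
      by_contra h
      exact hmS (by rw [hS, Set.mem_setOf_eq]; linarith)
    have := (div_lt_iff₀ hd).mp hlt
    nlinarith [this]
  -- the slope function
  set F : ℕ → ℝ := fun j => ((M:ℝ) - (j:ℝ)) * ((N:ℝ) - (j:ℝ)) / (D - (j:ℝ)) with hF
  -- step up
  have step_up : ∀ j : ℕ, (j : ℝ) + 1 < D →
      (0:ℝ) ≤ ((M:ℝ) - j) * ((N:ℝ) - j) - ((M:ℝ) + (N:ℝ) - 1 - 2 * j) * (D - j) →
      F j ≤ F (j+1) := by
    intro j hj hg
    have h1 : (0:ℝ) < D - (j:ℝ) := by linarith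
    have h2 : (0:ℝ) < D - ((j:ℝ)+1) := by linarith
    simp only [hF]
    push_cast
    rw [div_le_div_iff₀ h1 h2]
    nlinarith [hg]
  -- step down
  have step_down : ∀ j : ℕ, (j : ℝ) + 1 < D →
      ((M:ℝ) - j) * ((N:ℝ) - j) - ((M:ℝ) + (N:ℝ) - 1 - 2 * j) * (D - j) ≤ (0:ℝ) →
      F (j+1) ≤ F j := by
    intro j hj hg
    have h1 : (0:ℝ) < D - (j:ℝ) := by linarith
    have h2 : (0:ℝ) < D - ((j:ℝ)+1) := by linarith
    simp only [hF]
    push_cast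
    rw [div_le_div_iff₀ h2 h1]
    nlinarith [hg]
  -- g j ≥ 0 for l ≤ j, j + 1 < D (concavity)
  have g_nonneg : ∀ j : ℕ, l ≤ j → (j : ℝ) + 1 < D →
      (0:ℝ) ≤ ((M:ℝ) - j) * ((N:ℝ) - j) - ((M:ℝ) + (N:ℝ) - 1 - 2 * j) * (D - j) := by
    intro j hlj hj
    have hlj' : (l : ℝ) ≤ (j : ℝ) := by exact_mod_cast hlj
    have hMD : (0:ℝ) ≤ ((M:ℝ) - D) * ((N:ℝ) - D) :=
      mul_nonneg (by linarith) (by linarith)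
    have h3 : (0:ℝ) < D - 1 - (l:ℝ) := by linarith
    have hid : (((M:ℝ) - j) * ((N:ℝ) - j) - ((M:ℝ) + (N:ℝ) - 1 - 2 * j) * (D - j)) * (D - 1 - (l:ℝ))
        = (D - 1 - (j:ℝ)) * (((M:ℝ) - l) * ((N:ℝ) - l) - ((M:ℝ) + (N:ℝ) - 1 - 2 * l) * (D - l))
          + ((j:ℝ) - l) * (((M:ℝ) - D) * ((N:ℝ) - D))
          + ((j:ℝ) - l) * (D - 1 - (j:ℝ)) * (D - 1 - (l:ℝ)) := by ring
    have h4 : (0:ℝ) ≤ (((M:ℝ) - j) * ((N:ℝ) - j) - ((M:ℝ) + (N:ℝ) - 1 - 2 * j) * (D - j)) * (D - 1 - (l:ℝ)) := by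
      rw [hid]
      have t1 : (0:ℝ) ≤ (D - 1 - (j:ℝ)) * (((M:ℝ) - l) * ((N:ℝ) - l) - ((M:ℝ) + (N:ℝ) - 1 - 2 * l) * (D - l)) :=
        mul_nonneg (by linarith) gl
      have t2 : (0:ℝ) ≤ ((j:ℝ) - l) * (((M:ℝ) - D) * ((N:ℝ) - D)) :=
        mul_nonneg (by linarith) hMD
      have t3 : (0:ℝ) ≤ ((j:ℝ) - l) * (D - 1 - (j:ℝ)) * (D - 1 - (l:ℝ)) :=
        mul_nonneg (mul_nonneg (by linarith) (by linarith)) h3.le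
      linarith
    by_contra hcon
    push_neg at hcon
    have := mul_neg_of_neg_of_pos hcon h3
    linarith
  -- claim up
  have claim_up : ∀ j : ℕ, l ≤ j → ((j : ℝ) < D → F l ≤ F j) := by
    intro j hj
    induction j, hj using Nat.le_induction with
    | base => intro _; exact le_refl _
    | succ j hlj IH =>
      intro hj1
      have hj1' : (j : ℝ) + 1 < D := by push_cast at hj1; linarith
      have hjD : (j : ℝ) < D := by linarith
      exact (IH hjD).trans (step_up j hj1' (g_nonneg j hlj hj1'))
  -- claim down
  have claim_down : ∀ k : ℕ, k ≤ l → F l ≤ F (l - k) := by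
    intro k
    induction k with
    | zero => intro _; simp
    | succ k IH =>
      intro hk1
      have hk : k ≤ l := by omega
      set m : ℕ := l - (k+1) with hm
      have hm1 : m + 1 = l - k := by omega
      have hml : m < l := by omega
      have hmD : (m : ℝ) + 1 < D := by
        have h1 : m + 1 ≤ l := by omega
        have h2 : (m : ℝ) + 1 ≤ (l : ℝ) := by exact_mod_cast h1
        linarith
      have := step_down m hmD (hgm m hml)
      rw [hm1] at this
      exact (IH hk).trans this
  refine ⟨hlD, ?_⟩
  intro j hj
  rcases le_or_gt l j with h | h
  · exact claim_up j h hj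
  · have hkl : l - j ≤ l := Nat.sub_le _ _
    have := claim_down (l - j) hkl
    have he : l - (l - j) = j := by omega
    rw [he] at this
    exact this

set_option maxHeartbeats 1000000 in
theorem stmt3 (M N K : ℕ) (hM : 0 < M) (hN : 0 < N) (hK : 3 ≤ K)
    (hNK : N < (K + 1) * M - 1) (i : ℕ) (hi2 : 2 ≤ i) (hiK : i ≤ K - 1)
    (D : ℝ) (hD0 : 0 ≤ D) (hDL : D ≤ ((min N (K * M) : ℕ) : ℝ) / (K : ℝ))
    (r : ℝ) (hr0 : 0 ≤ r) (hrD : r ≤ D) :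
    dIC M N D r ≤ dIC (i * M) N ((i : ℝ) * D) ((i : ℝ) * r) := by
  classical
  have hKpos : (0:ℝ) < (K:ℝ) := by exact_mod_cast (by omega : 0 < K)
  have hiR : (2:ℝ) ≤ (i:ℝ) := by exact_mod_cast hi2
  have hipos : (0:ℝ) < (i:ℝ) := by linarith
  have hiK1 : i + 1 ≤ K := by omega
  have hiKR : (i:ℝ) + 1 ≤ (K:ℝ) := by exact_mod_cast hiK1
  have hminKM : ((min N (K * M) : ℕ) : ℝ) ≤ (K:ℝ) * (M:ℝ) := by
    have : (min N (K * M) : ℕ) ≤ K * M := min_le_right _ _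
    calc ((min N (K * M) : ℕ) : ℝ) ≤ ((K * M : ℕ) : ℝ) := by exact_mod_cast this
      _ = (K:ℝ) * (M:ℝ) := by push_cast; ring
  have hminN : ((min N (K * M) : ℕ) : ℝ) ≤ (N:ℝ) := by
    exact_mod_cast (min_le_left N (K*M))
  have hDKmin : D * (K:ℝ) ≤ ((min N (K * M) : ℕ) : ℝ) := (le_div_iff₀ hKpos).mp hDL
  have hDM : D ≤ (M:ℝ) := by nlinarith
  have hDKN : D * (K:ℝ) ≤ (N:ℝ) := hDKmin.trans hminN
  have hDN : D ≤ (N:ℝ) := by nlinarith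
  have hiDM : (i:ℝ) * D ≤ (i:ℝ) * (M:ℝ) := by nlinarith
  have hiDN : (i:ℝ) * D ≤ (N:ℝ) := by nlinarith
  by_cases hcase : D ≤ 0 ∨ D ≤ r
  · have hcase' : (i:ℝ) * D ≤ 0 ∨ (i:ℝ) * D ≤ (i:ℝ) * r := by
      rcases hcase with h | h
      · left; nlinarith
      · right; nlinarith
    simp only [dIC, if_pos hcase, if_pos hcase']
    exact le_refl 0
  · push_neg at hcase
    obtain ⟨hDpos, hrlt⟩ := hcase
    have hiDpos : (0:ℝ) < (i:ℝ) * D := mul_pos hipos hDpos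
    obtain ⟨hlD, hFmin⟩ := lIdx_spec_s3 M N D hDpos hDM hDN
    have hiMcast : ((i * M : ℕ) : ℝ) = (i:ℝ) * (M:ℝ) := by push_cast; ring
    obtain ⟨hl'D, _⟩ := lIdx_spec_s3 (i * M) N ((i:ℝ) * D) hiDpos (by rw [hiMcast]; exact hiDM) hiDN
    set l : ℕ := lIdx M N D with hldef
    set l' : ℕ := lIdx (i * M) N ((i:ℝ) * D) with hl'def
    -- key integer fact: (i+1) l' + 1 ≤ i N
    have hkey : (i + 1) * l' + 1 ≤ i * N := by
      rcases le_total N (K * M) with hmin | hmin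
      · -- min = N, D*K ≤ N
        have hlt : ((i + 1) * l' : ℕ) < (i * N : ℕ) := by
          have h1 : ((i:ℝ) + 1) * (l' : ℝ) < ((i:ℝ) + 1) * ((i:ℝ) * D) :=
            mul_lt_mul_of_pos_left hl'D (by linarith)
          have h2 : ((i:ℝ) + 1) * D ≤ (N:ℝ) := by nlinarith
          have h3 : ((i:ℝ) + 1) * ((i:ℝ) * D) ≤ (i:ℝ) * (N:ℝ) := by nlinarith
          have : ((i:ℝ) + 1) * (l' : ℝ) < (i:ℝ) * (N:ℝ) := lt_of_lt_of_le h1 h3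
          exact_mod_cast (by push_cast; linarith : (((i + 1) * l' : ℕ) : ℝ) < ((i * N : ℕ) : ℝ))
        omega
      · -- K*M ≤ N
        have hKMN : (K:ℝ) * (M:ℝ) ≤ (N:ℝ) := by
          calc (K:ℝ) * (M:ℝ) = ((K * M : ℕ) : ℝ) := by push_cast; ring
            _ ≤ (N:ℝ) := by exact_mod_cast hmin
        have hl'iM : l' < i * M := by
          have : (l' : ℝ) < ((i * M : ℕ) : ℝ) := by rw [hiMcast]; exact lt_of_lt_of_le hl'D hiDM
          exact_mod_cast this
        have h1 : (l' : ℝ) + 1 ≤ (i:ℝ) * (M:ℝ) := by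
          have : l' + 1 ≤ i * M := hl'iM
          calc (l' : ℝ) + 1 = ((l' + 1 : ℕ) : ℝ) := by push_cast; ring
            _ ≤ ((i * M : ℕ) : ℝ) := by exact_mod_cast this
            _ = (i:ℝ) * (M:ℝ) := by push_cast; ring
        have hgoal : (((i + 1) * l' + 1 : ℕ) : ℝ) ≤ ((i * N : ℕ) : ℝ) := by
          push_cast
          nlinarith [mul_le_mul_of_nonneg_left h1 (by linarith : (0:ℝ) ≤ (i:ℝ) + 1),
            mul_le_mul_of_nonneg_left hKMN (by linarith : (0:ℝ) ≤ (i:ℝ)),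
            mul_le_mul_of_nonneg_right hiKR (by positivity : (0:ℝ) ≤ (i:ℝ) * (M:ℝ))]
        exact_mod_cast hgoal
    have hkeyR : ((i:ℝ) + 1) * (l' : ℝ) + 1 ≤ (i:ℝ) * (N:ℝ) := by
      calc ((i:ℝ) + 1) * (l' : ℝ) + 1 = (((i + 1) * l' + 1 : ℕ) : ℝ) := by push_cast; ring
        _ ≤ ((i * N : ℕ) : ℝ) := by exact_mod_cast hkey
        _ = (i:ℝ) * (N:ℝ) := by push_cast; ring
    -- j₀ := l' / i
    set j₀ : ℕ := l' / i with hj₀def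
    have hipn : 0 < i := by omega
    have hdm : i * j₀ + l' % i = l' := by rw [hj₀def]; exact Nat.div_add_mod l' i
    have hmod := Nat.mod_lt l' hipn
    have hj₀a : i * j₀ ≤ l' := by omega
    have hj₀b : l' + 1 ≤ i * j₀ + i := by omega
    have haR : (i:ℝ) * (j₀:ℝ) ≤ (l':ℝ) := by
      calc (i:ℝ) * (j₀:ℝ) = ((i * j₀ : ℕ) : ℝ) := by push_cast; ring
        _ ≤ (l':ℝ) := by exact_mod_cast hj₀a
    have hbR : (l':ℝ) + 1 ≤ (i:ℝ) * (j₀:ℝ) + (i:ℝ) := by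
      calc (l':ℝ) + 1 = ((l' + 1 : ℕ) : ℝ) := by push_cast; ring
        _ ≤ ((i * j₀ + i : ℕ) : ℝ) := by exact_mod_cast hj₀b
        _ = (i:ℝ) * (j₀:ℝ) + (i:ℝ) := by push_cast; ring
    have hj₀D : (j₀:ℝ) < D := by nlinarith
    have hl'iMR : (l':ℝ) < (i:ℝ) * (M:ℝ) := lt_of_lt_of_le hl'D hiDM
    have hl'N : (l':ℝ) < (N:ℝ) := lt_of_lt_of_le hl'D hiDN
    have hdpos1 : (0:ℝ) < D - (j₀:ℝ) := by linarith
    have hdpos2 : (0:ℝ) < (i:ℝ) * D - (l':ℝ) := by linarith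
    -- slope comparison at j₀
    have h1 : ((M:ℝ) - (j₀:ℝ)) * ((i:ℝ) * D - (l':ℝ)) ≤ ((i:ℝ) * (M:ℝ) - (l':ℝ)) * (D - (j₀:ℝ)) := by
      nlinarith [mul_nonneg (by linarith : (0:ℝ) ≤ (l':ℝ) - (i:ℝ) * (j₀:ℝ))
        (by linarith : (0:ℝ) ≤ (M:ℝ) - D)]
    have h2 : (N:ℝ) - (j₀:ℝ) ≤ (i:ℝ) * ((N:ℝ) - (l':ℝ)) := by
      nlinarith [mul_nonneg (by linarith : (0:ℝ) ≤ (i:ℝ) - 1)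
        (by linarith : (0:ℝ) ≤ (i:ℝ) * (N:ℝ) - ((i:ℝ) + 1) * (l':ℝ) - 1), hbR, hipos]
    have hslope : ((M:ℝ) - (j₀:ℝ)) * ((N:ℝ) - (j₀:ℝ)) / (D - (j₀:ℝ)) ≤
        (i:ℝ) * (((i:ℝ) * (M:ℝ) - (l':ℝ)) * ((N:ℝ) - (l':ℝ)) / ((i:ℝ) * D - (l':ℝ))) := by
      rw [mul_div_assoc', div_le_div_iff₀ hdpos1 hdpos2]
      have hA : (0:ℝ) ≤ (N:ℝ) - (j₀:ℝ) := by linarith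
      have hB : (0:ℝ) ≤ ((i:ℝ) * (M:ℝ) - (l':ℝ)) * (D - (j₀:ℝ)) :=
        mul_nonneg (by linarith) (by linarith)
      calc ((M:ℝ) - (j₀:ℝ)) * ((N:ℝ) - (j₀:ℝ)) * ((i:ℝ) * D - (l':ℝ))
          = ((N:ℝ) - (j₀:ℝ)) * (((M:ℝ) - (j₀:ℝ)) * ((i:ℝ) * D - (l':ℝ))) := by ring
        _ ≤ ((N:ℝ) - (j₀:ℝ)) * (((i:ℝ) * (M:ℝ) - (l':ℝ)) * (D - (j₀:ℝ))) :=
            mul_le_mul_of_nonneg_left h1 hA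
        _ = (((i:ℝ) * (M:ℝ) - (l':ℝ)) * (D - (j₀:ℝ))) * ((N:ℝ) - (j₀:ℝ)) := by ring
        _ ≤ (((i:ℝ) * (M:ℝ) - (l':ℝ)) * (D - (j₀:ℝ))) * ((i:ℝ) * ((N:ℝ) - (l':ℝ))) :=
            mul_le_mul_of_nonneg_left h2 hB
        _ = (i:ℝ) * (((i:ℝ) * (M:ℝ) - (l':ℝ)) * ((N:ℝ) - (l':ℝ))) * (D - (j₀:ℝ)) := by ring
    have hsl : ((M:ℝ) - (l:ℝ)) * ((N:ℝ) - (l:ℝ)) / (D - (l:ℝ)) ≤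
        (i:ℝ) * (((i:ℝ) * (M:ℝ) - (l':ℝ)) * ((N:ℝ) - (l':ℝ)) / ((i:ℝ) * D - (l':ℝ))) :=
      (hFmin j₀ hj₀D).trans hslope
    -- assemble
    have hcond1 : ¬ (D ≤ 0 ∨ D ≤ r) := by push_neg; exact ⟨hDpos, hrlt⟩
    have hcond2 : ¬ ((i:ℝ) * D ≤ 0 ∨ (i:ℝ) * D ≤ (i:ℝ) * r) := by
      push_neg
      constructor
      · exact hiDpos
      · nlinarith
    simp only [dIC, if_neg hcond1, if_neg hcond2]
    rw [← hldef, ← hl'def, hiMcast]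
    have hDr : (0:ℝ) ≤ D - r := by linarith
    calc ((M:ℝ) - (l:ℝ)) * ((N:ℝ) - (l:ℝ)) / (D - (l:ℝ)) * (D - r)
        ≤ ((i:ℝ) * (((i:ℝ) * (M:ℝ) - (l':ℝ)) * ((N:ℝ) - (l':ℝ)) / ((i:ℝ) * D - (l':ℝ)))) * (D - r) :=
          mul_le_mul_of_nonneg_right hsl hDr
      _ = ((i:ℝ) * (M:ℝ) - (l':ℝ)) * ((N:ℝ) - (l':ℝ)) / ((i:ℝ) * D - (l':ℝ)) * ((i:ℝ) * D - (i:ℝ) * r) := by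
          ring
end

section
/- Let M, N, K be positive integers with K ≥ 2 and N < (K−1)M+1. Then for every real r with 0 ≤ r ≤ N/K, the maximum over reals D with 0 ≤ D ≤ N/K of min over integers i with 1 ≤ i ≤ K of d^{iD}_{iM,N}(i·r) equals M·N − M·K·r, and it is attained at D = N/K. -/
/-!
For `D ≤ N/K` the first term of the minimum, `d^{D}_{M,N}(r)`, lies in the regime `l = 0`
(because `N + M ≤ KM` gives `N/K ≤ MN/(N+M-1)`), where it equals `MN(1 - r/D) ≤ MN - MKr`.
Conversely at `D = N/K` every term reaches this value: with `l` the interval index of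
`d^{iN/K}_{iM,N}`, the inequality reduces to `iMN - MKl ≤ i(iM - l)(N - l)`, a quadratic
inequality in `l` that holds on `0 ≤ l ≤ min(iM, N) - 1` as soon as `N + M ≤ KM`.
-/

open Finset

section lIdx

variable {P Q : ℕ} {D : ℝ}

lemma lIdx_le_of_le {l : ℕ}
    (h : D ≤ ((P : ℝ) * Q - l * (l + 1)) / (Q + P - 1 - 2 * l)) : lIdx P Q D ≤ l :=
  Nat.sInf_le h

lemma lIdx_eq_zero (h : D ≤ (P : ℝ) * Q / (Q + P - 1)) : lIdx P Q D = 0 :=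
  Nat.le_zero.1 (lIdx_le_of_le (by simpa using h))

lemma lIdx_lt_min (hP : 0 < P) (hQ : 0 < Q) (hDP : D ≤ P) (hDQ : D ≤ Q) :
    lIdx P Q D < min P Q := by
  set m := min P Q with hm_def
  have hm : 0 < m := lt_min hP hQ
  suffices lIdx P Q D ≤ m - 1 by omega
  apply lIdx_le_of_le
  have hmP : (m : ℝ) ≤ P := by exact_mod_cast min_le_left P Q
  have hmQ : (m : ℝ) ≤ Q := by exact_mod_cast min_le_right P Q
  have hDm : D ≤ m := by rw [hm_def, Nat.cast_min]; exact le_min hDP hDQ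
  -- the threshold at `l = m - 1` is exactly `m`, because `(P - m) * (Q - m) = 0`
  have hprod : ((P : ℝ) - m) * (Q - m) = 0 := by
    rcases min_choice P Q with h | h <;> simp [hm_def, h]
  rw [Nat.cast_sub hm, Nat.cast_one, le_div_iff₀ (by linarith)]
  nlinarith [mul_le_mul_of_nonneg_right hDm (by linarith : (0 : ℝ) ≤ Q + P - 1 - 2 * (m - 1))]

lemma lIdx_lt (hl : lIdx P Q D < min P Q) (hD : 0 < D) : (lIdx P Q D : ℝ) < D := by
  cases h : lIdx P Q D with
  | zero => simpa using hD
  | succ l =>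
    rw [h, lt_min_iff] at hl
    have hlP : (l : ℝ) + 2 ≤ P := by exact_mod_cast hl.1
    have hlQ : (l : ℝ) + 2 ≤ Q := by exact_mod_cast hl.2
    have hnot : ¬ D ≤ ((P : ℝ) * Q - l * (l + 1)) / (Q + P - 1 - 2 * l) :=
      Nat.notMem_of_lt_sInf (show l < lIdx P Q D by omega)
    have hthr : (l : ℝ) + 1 ≤ ((P : ℝ) * Q - l * (l + 1)) / (Q + P - 1 - 2 * l) := by
      rw [le_div_iff₀ (by linarith)]
      nlinarith [mul_nonneg (by linarith : (0 : ℝ) ≤ P - l - 1)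
        (by linarith : (0 : ℝ) ≤ Q - l - 1)]
    push_cast
    linarith [not_le.1 hnot]

end lIdx

section dIC

variable {P Q : ℕ} {D r : ℝ}

lemma dIC_of_le (h : D ≤ r) : dIC P Q D r = 0 :=
  if_pos (Or.inr h)

lemma dIC_of_lt (hD : 0 < D) (h : r < D) :
    dIC P Q D r = (P - lIdx P Q D) * (Q - lIdx P Q D) / (D - lIdx P Q D) * (D - r) :=
  if_neg (by push Not; exact ⟨hD, h⟩)

lemma dIC_eq_of_le_mul_div (hD : 0 < D) (h : r < D) (hDPQ : D ≤ (P : ℝ) * Q / (Q + P - 1)) :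
    dIC P Q D r = P * Q / D * (D - r) := by
  rw [dIC_of_lt hD h, lIdx_eq_zero hDPQ]
  simp

end dIC

/-- At `D = i n / k`, `i` times the slope `(i m - l)(n - l) / (D - l)` of `d^{D}_{im,n}` is at
least `m k`; this is that comparison with the denominator cleared. -/
lemma mul_mul_sub_le_mul_sub_mul_sub {m n k i l : ℝ} (hm : 0 ≤ m) (hi : 1 ≤ i) (hik : i ≤ k)
    (hl0 : 0 ≤ l) (hln : l + 1 ≤ n) (hlm : l + 1 ≤ i * m) (hnk : n + m ≤ k * m) :
    i * m * n - m * k * l ≤ i * ((i * m - l) * (n - l)) := by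
  rcases le_total n ((i - 1) * m) with h | h
  · nlinarith [mul_nonneg
        (mul_nonneg (by linarith : (0 : ℝ) ≤ i) (by linarith : (0 : ℝ) ≤ n - 1 - l))
        (by linarith : (0 : ℝ) ≤ (i - 1) * m - l),
      mul_nonneg (by linarith : (0 : ℝ) ≤ i) (by linarith : (0 : ℝ) ≤ (i - 1) * m - l),
      mul_nonneg hl0 (mul_nonneg hm (by linarith : (0 : ℝ) ≤ k - i))]
  · nlinarith [mul_nonneg (by linarith : (0 : ℝ) ≤ i) (sq_nonneg (l - (i - 1) * m)),
      mul_nonneg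
        (mul_nonneg (by linarith : (0 : ℝ) ≤ n - (i - 1) * m)
          (by linarith : (0 : ℝ) ≤ i - 1))
        (by linarith : (0 : ℝ) ≤ i * m - l),
      mul_nonneg hl0 (by linarith : (0 : ℝ) ≤ m * k - m - n)]

section MAC

variable {M N K : ℕ} {D r : ℝ}

lemma dIC_le_of_le_div (hN : 0 < N) (hK : 0 < K) (hNK : N + M ≤ K * M)
    (hr0 : 0 ≤ r) (hrN : r ≤ N / K) (hD : D ≤ N / K) :
    dIC M N D r ≤ M * N - M * K * r := by
  have hKr : (0 : ℝ) < K := by exact_mod_cast hK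
  have hKD : K * D ≤ N := (le_div_iff₀' hKr).1 hD
  have hKrN : K * r ≤ N := (le_div_iff₀' hKr).1 hrN
  have hM : (0 : ℝ) ≤ M := Nat.cast_nonneg M
  by_cases hDr : D ≤ 0 ∨ D ≤ r
  · rw [dIC, if_pos hDr]
    nlinarith
  push Not at hDr
  obtain ⟨hD0, hrD⟩ := hDr
  -- `N + M ≤ K M` puts every `D ≤ N / K` in the regime `l = 0`
  have hdiv : (N : ℝ) / K ≤ M * N / (N + M - 1) := by
    have hNKr : (N : ℝ) + M ≤ K * M := by exact_mod_cast hNK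
    have hN1 : (1 : ℝ) ≤ N := by exact_mod_cast hN
    rw [div_le_div_iff₀ hKr (by nlinarith)]
    nlinarith
  rw [dIC_eq_of_le_mul_div hD0 hrD (hD.trans hdiv), div_mul_eq_mul_div, div_le_iff₀ hD0]
  nlinarith [mul_nonneg (mul_nonneg hM hr0) (sub_nonneg.2 hKD)]

lemma le_dIC_mul_div (hM : 0 < M) (hN : 0 < N) (hNK : N + M ≤ K * M) {i : ℕ} (hi : 1 ≤ i)
    (hiK : i ≤ K) (hr0 : 0 ≤ r) (hrN : r ≤ N / K) :
    M * N - M * K * r ≤ dIC (i * M) N (i * (N / K)) (i * r) := by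
  have hKr : (0 : ℝ) < K := by exact_mod_cast (show 0 < K by omega)
  have hKN : (K : ℝ) * (N / K) = N := mul_div_cancel₀ _ hKr.ne'
  rcases hrN.eq_or_lt with rfl | hrN
  · rw [dIC_of_le le_rfl, mul_assoc, hKN, sub_self]
  set D : ℝ := i * (N / K) with hD_def
  have hir : (1 : ℝ) ≤ i := by exact_mod_cast hi
  have hiKr : (i : ℝ) ≤ K := by exact_mod_cast hiK
  have hNKM : (N : ℝ) + M ≤ K * M := by exact_mod_cast hNK
  have hD0 : 0 < D := by positivity
  have hrD : i * r < D := mul_lt_mul_of_pos_left hrN (by linarith)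
  have hDiM : D ≤ ((i * M : ℕ) : ℝ) := by
    push_cast
    exact mul_le_mul_of_nonneg_left ((div_le_iff₀' hKr).2 (by linarith)) (by linarith)
  have hDN : D ≤ N := by nlinarith [div_nonneg (Nat.cast_nonneg N) hKr.le]
  have hl := lIdx_lt_min (by positivity) hN hDiM hDN
  have hlD := lIdx_lt hl hD0
  rw [lt_min_iff] at hl
  set l := lIdx (i * M) N D
  have hliM : (l : ℝ) + 1 ≤ i * M := by exact_mod_cast hl.1
  have hlN : (l : ℝ) + 1 ≤ N := by exact_mod_cast hl.2
  have hslope : M * K * (D - l) ≤ i * ((i * M - l) * (N - l)) := by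
    rw [hD_def]
    linear_combination M * i * hKN +
      mul_mul_sub_le_mul_sub_mul_sub (Nat.cast_nonneg M) hir hiKr (Nat.cast_nonneg l) hlN hliM hNKM
  have hDl : 0 < D - l := sub_pos.2 hlD
  rw [dIC_of_lt hD0 hrD]
  push_cast
  calc (M : ℝ) * N - M * K * r = M * K * (D - l) * (N / K - r) / (D - l) := by
        field_simp
    _ ≤ i * ((i * M - l) * (N - l)) * (N / K - r) / (D - l) := by
        gcongr
    _ = (i * M - l) * (N - l) / (D - l) * (D - i * r) := by
        rw [hD_def]
        ring

end MAC

theorem stmt4 (M N K : ℕ) (hM : 0 < M) (hN : 0 < N) (hK : 2 ≤ K)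
    (hNK : N < (K - 1) * M + 1)
    (r : ℝ) (hr0 : 0 ≤ r) (hrN : r ≤ (N : ℝ) / (K : ℝ)) :
    IsGreatest
      {x : ℝ | ∃ D : ℝ, 0 ≤ D ∧ D ≤ (N : ℝ) / (K : ℝ) ∧
        x = (Finset.Icc 1 K).inf' (Finset.nonempty_Icc.2 (by omega))
              (fun i => dIC (i * M) N ((i : ℝ) * D) ((i : ℝ) * r))}
      ((M : ℝ) * (N : ℝ) - (M : ℝ) * (K : ℝ) * r) ∧
    (Finset.Icc 1 K).inf' (Finset.nonempty_Icc.2 (by omega))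
        (fun i => dIC (i * M) N ((i : ℝ) * ((N : ℝ) / (K : ℝ))) ((i : ℝ) * r))
      = (M : ℝ) * (N : ℝ) - (M : ℝ) * (K : ℝ) * r := by
  have hNK' : N + M ≤ K * M := by
    have := Nat.sub_one_mul K M
    have := Nat.le_mul_of_pos_left M (show 0 < K by omega)
    omega
  have hupper : ∀ D ≤ (N : ℝ) / K, (Icc 1 K).inf' (nonempty_Icc.2 (by omega))
      (fun i => dIC (i * M) N ((i : ℝ) * D) ((i : ℝ) * r)) ≤ M * N - M * K * r := fun D hD =>
    (inf'_le _ (mem_Icc.2 ⟨le_rfl, by omega⟩)).trans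
      (by simpa using dIC_le_of_le_div hN (by omega) hNK' hr0 hrN hD)
  have hvalue := le_antisymm (hupper _ le_rfl)
    (le_inf' _ _ fun i hi => le_dIC_mul_div hM hN hNK' (mem_Icc.1 hi).1 (mem_Icc.1 hi).2 hr0 hrN)
  refine ⟨⟨⟨N / K, by positivity, le_rfl, hvalue.symm⟩, ?_⟩, hvalue⟩
  rintro _ ⟨D, -, hD, rfl⟩
  exact hupper D hD
end

section
/- Let K ≥ 2, M ≥ 2 be integers, let l be an integer with 0 ≤ l ≤ 2M−3, and set N = (K−1)M+1+l (so N < (K+1)M−1). Set c_l = ⌊l/2⌋(⌊l/2⌋+1) + 2(⌊l/2⌋+1)(l/2 − ⌊l/2⌋) and D_l = (MN − c_l)/(N+M−1−l). Then for every real r with 0 ≤ r ≤ D_l: d^{D_l}_{M,N}(r) = d^{K·D_l}_{KM,N}(K·r) = MN − c_l − (N+M−1−l)·r. -/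
private lemma quadPos (s B C a x : ℝ) (hs : 0 < s) (hx : x ≤ a)
    (h1 : 0 < s * a ^ 2 + B * a + C)
    (h2 : s * (a + 1) ^ 2 + B * (a + 1) + C ≤ 0) :
    0 < s * x ^ 2 + B * x + C := by
  nlinarith [mul_nonneg (sub_nonneg.2 hx)
      (by nlinarith : (0:ℝ) ≤ (s * a ^ 2 + B * a + C) - (s * (a + 1) ^ 2 + B * (a + 1) + C)),
    mul_nonneg (mul_nonneg hs.le (sub_nonneg.2 hx)) (by linarith : (0:ℝ) ≤ a + 1 - x)]

private lemma lIdx_spec_s5 (M N : ℕ) (D : ℝ) (L : ℕ)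
    (h1 : D ≤ ((M : ℝ) * (N : ℝ) - (L : ℝ) * ((L : ℝ) + 1)) /
        ((N : ℝ) + (M : ℝ) - 1 - 2 * (L : ℝ)))
    (h2 : ∀ m : ℕ, m < L → ¬ (D ≤ ((M : ℝ) * (N : ℝ) - (m : ℝ) * ((m : ℝ) + 1)) /
        ((N : ℝ) + (M : ℝ) - 1 - 2 * (m : ℝ)))) :
    lIdx M N D = L := by
  have hmem : L ∈ {l : ℕ | D ≤ ((M : ℝ) * (N : ℝ) - (l : ℝ) * ((l : ℝ) + 1)) /
        ((N : ℝ) + (M : ℝ) - 1 - 2 * (l : ℝ))} := h1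
  refine le_antisymm (Nat.sInf_le hmem) (le_csInf ⟨L, hmem⟩ ?_)
  intro m hm
  by_contra hno
  exact h2 m (by omega) hm

set_option maxHeartbeats 1000000 in
theorem stmt5 (K M : ℕ) (hK : 2 ≤ K) (hM : 2 ≤ M) (l : ℕ) (hl : l ≤ 2 * M - 3) :
    let N : ℕ := (K - 1) * M + 1 + l
    let b : ℕ := l / 2
    let c : ℝ := (b : ℝ) * ((b : ℝ) + 1) + 2 * ((b : ℝ) + 1) * ((l : ℝ) / 2 - (b : ℝ))
    let Dl : ℝ := ((M : ℝ) * (N : ℝ) - c) / ((N : ℝ) + (M : ℝ) - 1 - (l : ℝ))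
    ∀ r : ℝ, 0 ≤ r → r ≤ Dl →
      dIC M N Dl r
          = (M : ℝ) * (N : ℝ) - c - ((N : ℝ) + (M : ℝ) - 1 - (l : ℝ)) * r ∧
      dIC (K * M) N ((K : ℝ) * Dl) ((K : ℝ) * r)
          = (M : ℝ) * (N : ℝ) - c - ((N : ℝ) + (M : ℝ) - 1 - (l : ℝ)) * r := by
  obtain ⟨K, rfl⟩ : ∃ n, K = n + 2 := ⟨K - 2, by omega⟩
  intro N b c Dl r hr hrD
  have hceq : c = (b : ℝ) * ((b : ℝ) + 1) + 2 * ((b : ℝ) + 1) * ((l : ℝ) / 2 - (b : ℝ)) := rfl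
  have hDldef : Dl = ((M : ℝ) * (N : ℝ) - c) / ((N : ℝ) + (M : ℝ) - 1 - (l : ℝ)) := rfl
  have hbdef : b = l / 2 := rfl
  have hNdef0 : N = (K + 2 - 1) * M + 1 + l := rfl
  clear_value N b c Dl
  set L : ℕ := (l + 1) / 2 with hLdef
  set L2 : ℕ := (K + 1) * M + L with hL2def
  have hNdef : N = (K + 1) * M + 1 + l := by
    rw [hNdef0]; norm_num
  have hlM : l + 3 ≤ 2 * M := by omega
  -- basic real facts
  have hK0 : (0:ℝ) ≤ (K:ℝ) := Nat.cast_nonneg K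
  have hMr : (2:ℝ) ≤ (M:ℝ) := by exact_mod_cast hM
  have hl0 : (0:ℝ) ≤ (l:ℝ) := Nat.cast_nonneg l
  have hL0 : (0:ℝ) ≤ (L:ℝ) := Nat.cast_nonneg L
  have hNr : (N:ℝ) = ((K:ℝ) + 1) * (M:ℝ) + 1 + (l:ℝ) := by
    rw [hNdef]; push_cast; ring
  have hlr : (l:ℝ) + 3 ≤ 2 * (M:ℝ) := by exact_mod_cast hlM
  have hL1 : 2 * (L:ℝ) ≤ (l:ℝ) + 1 := by
    have h : 2 * L ≤ l + 1 := by omega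
    exact_mod_cast h
  have hL2' : (l:ℝ) ≤ 2 * (L:ℝ) := by
    have h : l ≤ 2 * L := by omega
    exact_mod_cast h
  have hLM : (L:ℝ) + 1 ≤ (M:ℝ) := by
    have h : L + 1 ≤ M := by omega
    exact_mod_cast h
  have hparN : l = 2 * L ∨ l + 1 = 2 * L := by omega
  have hpar : (l:ℝ) = 2 * (L:ℝ) ∨ (l:ℝ) = 2 * (L:ℝ) - 1 := by
    rcases hparN with h | h
    · left; exact_mod_cast h
    · right
      have h' : (l:ℝ) + 1 = 2 * (L:ℝ) := by exact_mod_cast h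
      linarith
  have hcL : c = (L:ℝ) * ((l:ℝ) + 1 - (L:ℝ)) := by
    rcases hparN with h | h
    · have hb : b = L := by omega
      have hlr2 : (l:ℝ) = 2 * (L:ℝ) := by exact_mod_cast h
      rw [hceq, hb, hlr2]; ring
    · have hL1' : 1 ≤ L := by omega
      have hbr : (b:ℝ) = (L:ℝ) - 1 := by
        have hb : b + 1 = L := by omega
        have : ((b:ℝ) + 1) = (L:ℝ) := by exact_mod_cast hb
        linarith
      have hlr2 : (l:ℝ) = 2 * (L:ℝ) - 1 := by
        have h' : (l:ℝ) + 1 = 2 * (L:ℝ) := by exact_mod_cast h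
        linarith
      rw [hceq, hbr, hlr2]; ring
  have hMLpos : (0:ℝ) < (M:ℝ) - (L:ℝ) := by linarith
  have hKM0 : (0:ℝ) ≤ (K:ℝ) * (M:ℝ) := mul_nonneg hK0 (by linarith)
  have hs : (0:ℝ) < ((K:ℝ) + 2) * (M:ℝ) := by linarith [hKM0]
  have hdenKM : (N:ℝ) + (M:ℝ) - 1 - (l:ℝ) = ((K:ℝ) + 2) * (M:ℝ) := by
    rw [hNr]; ring
  have hDl : Dl = ((M:ℝ) * (N:ℝ) - c) / (((K:ℝ) + 2) * (M:ℝ)) := by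
    rw [hDldef, hdenKM]
  have hAux2 : (0:ℝ) < (l:ℝ) + 1 - (L:ℝ) := by linarith
  have hlL : (l:ℝ) + 2 ≤ (M:ℝ) + (L:ℝ) := by
    have h : l + 2 ≤ M + L := by omega
    exact_mod_cast h
  have hE : (0:ℝ) < (M:ℝ) * (N:ℝ) - c := by
    rw [hcL, hNr]
    linarith [mul_nonneg hL0 (by linarith : (0:ℝ) ≤ (M:ℝ) - 1 - ((l:ℝ) + 1 - (L:ℝ))),
      mul_nonneg (by linarith : (0:ℝ) ≤ (M:ℝ) - 1 - (L:ℝ)) (by linarith : (0:ℝ) ≤ (M:ℝ) - 1),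
      mul_nonneg hK0 (mul_self_nonneg (M:ℝ)),
      mul_nonneg hL0 hl0, mul_nonneg (by linarith : (0:ℝ) ≤ (M:ℝ)) hl0]
  have hDlpos : (0:ℝ) < Dl := by rw [hDl]; exact div_pos hE hs
  have hsDl : (((K:ℝ) + 2) * (M:ℝ)) * Dl = (M:ℝ) * (N:ℝ) - c := by
    rw [hDl]; field_simp
  have hMpos : (0:ℝ) < (M:ℝ) := by linarith
  have hPos1 : (0:ℝ) < ((K:ℝ) + 1) * (M:ℝ) + (L:ℝ) := by linarith [hKM0]
  have hPos1' : (0:ℝ) < ((K:ℝ) + 1) * (M:ℝ) + (L:ℝ) + 1 := by linarith [hKM0]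
  -- index computation, part 1
  have hIdx1 : lIdx M N Dl = L := by
    apply lIdx_spec_s5
    · have hd : (0:ℝ) < (N:ℝ) + (M:ℝ) - 1 - 2 * (L:ℝ) := by
        rw [hNr]; linarith [hKM0]
      rw [hDl, div_le_div_iff₀ hs hd, hcL, hNr]
      rcases hpar with h | h
      · rw [h]; exact le_of_eq (by ring)
      · rw [h]; linarith [mul_pos hMLpos hPos1]
    · intro m hm
      have hmr : (m:ℝ) + 1 ≤ (L:ℝ) := by exact_mod_cast hm
      have hm0 : (0:ℝ) ≤ (m:ℝ) := Nat.cast_nonneg m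
      have hd : (0:ℝ) < (N:ℝ) + (M:ℝ) - 1 - 2 * (m:ℝ) := by
        rw [hNr]; linarith [hKM0]
      rw [not_le, hDl, div_lt_div_iff₀ hd hs]
      have hq := quadPos (((K:ℝ) + 2) * (M:ℝ))
        ((((K:ℝ) + 2) * (M:ℝ)) + 2 * ((L:ℝ) * ((l:ℝ) + 1 - (L:ℝ)))
          - 2 * ((M:ℝ) * (((K:ℝ) + 1) * (M:ℝ) + 1 + (l:ℝ))))
        ((M:ℝ) * (((K:ℝ) + 1) * (M:ℝ) + 1 + (l:ℝ)) * (l:ℝ)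
          - ((L:ℝ) * ((l:ℝ) + 1 - (L:ℝ))) * (((K:ℝ) + 2) * (M:ℝ))
          - ((L:ℝ) * ((l:ℝ) + 1 - (L:ℝ))) * (l:ℝ))
        ((L:ℝ) - 1) (m:ℝ) hs (by linarith)
        (by rcases hpar with h | h
            · rw [h]; linarith [mul_pos hMLpos hPos1']
            · rw [h]; linarith [mul_pos hMLpos hPos1])
        (by rcases hpar with h | h
            · rw [h]; exact le_of_eq (by ring)
            · rw [h]; linarith [mul_pos hMLpos hPos1])
      rw [hcL, hNr]
      linarith [hq]
  -- index computation, part 2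
  have hKMc : (((K + 2) * M : ℕ) : ℝ) = ((K:ℝ) + 2) * (M:ℝ) := by push_cast; ring
  have hKc : ((K + 2 : ℕ) : ℝ) = (K:ℝ) + 2 := by push_cast; ring
  have hL2r : ((L2 : ℕ) : ℝ) = ((K:ℝ) + 1) * (M:ℝ) + (L:ℝ) := by
    rw [hL2def]; push_cast; ring
  have hK20 : ((K:ℝ) + 2) ≠ 0 := by positivity
  have hKDlval : ((K:ℝ) + 2) * Dl = ((M:ℝ) * (N:ℝ) - c) / (M:ℝ) := by
    rw [hDl, ← mul_div_assoc, mul_div_mul_left _ _ hK20]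
  have hLpos_odd : (l:ℝ) = 2 * (L:ℝ) - 1 → (0:ℝ) < (L:ℝ) := by
    intro h; linarith
  have hIdx2 : lIdx ((K + 2) * M) N (((K + 2 : ℕ) : ℝ) * Dl) = L2 := by
    apply lIdx_spec_s5
    · rw [hKMc, hL2r, hKc, hKDlval]
      have hd : (0:ℝ) < (N:ℝ) + ((K:ℝ) + 2) * (M:ℝ) - 1
          - 2 * (((K:ℝ) + 1) * (M:ℝ) + (L:ℝ)) := by
        rw [hNr]; linarith [hKM0]
      rw [div_le_div_iff₀ hMpos hd, hcL, hNr]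
      rcases hpar with h | h
      · rw [h]; exact le_of_eq (by ring)
      · rw [h]; linarith [mul_pos hMLpos (hLpos_odd h)]
    · intro m hm
      rw [hKMc, hKc, hKDlval]
      have hmr : (m:ℝ) + 1 ≤ (L2:ℝ) := by exact_mod_cast hm
      rw [hL2r] at hmr
      have hm0 : (0:ℝ) ≤ (m:ℝ) := Nat.cast_nonneg m
      have hd : (0:ℝ) < (N:ℝ) + ((K:ℝ) + 2) * (M:ℝ) - 1 - 2 * (m:ℝ) := by
        rw [hNr]; linarith [hKM0]
      rw [not_le, div_lt_div_iff₀ hd hMpos]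
      have hq := quadPos (M:ℝ)
        ((M:ℝ) - 2 * ((M:ℝ) * (((K:ℝ) + 1) * (M:ℝ) + 1 + (l:ℝ))
          - (L:ℝ) * ((l:ℝ) + 1 - (L:ℝ))))
        (((M:ℝ) * (((K:ℝ) + 1) * (M:ℝ) + 1 + (l:ℝ)) - (L:ℝ) * ((l:ℝ) + 1 - (L:ℝ)))
            * ((((K:ℝ) + 1) * (M:ℝ) + 1 + (l:ℝ)) + ((K:ℝ) + 2) * (M:ℝ) - 1)
          - ((K:ℝ) + 2) * (M:ℝ) * (M:ℝ) * (((K:ℝ) + 1) * (M:ℝ) + 1 + (l:ℝ)))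
        (((K:ℝ) + 1) * (M:ℝ) + (L:ℝ) - 1) (m:ℝ) hMpos (by linarith)
        (by rcases hpar with h | h
            · rw [h]; linarith [mul_pos hMLpos (show (0:ℝ) < (L:ℝ) + 1 by linarith)]
            · rw [h]; linarith [mul_pos hMLpos (hLpos_odd h)])
        (by rcases hpar with h | h
            · rw [h]; exact le_of_eq (by ring)
            · rw [h]; linarith [mul_pos hMLpos (hLpos_odd h)])
      rw [hcL, hNr]
      linarith [hq]
  -- slope identities
  have hslope1 : ((M:ℝ) - (L:ℝ)) * ((N:ℝ) - (L:ℝ))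
      = (((K:ℝ) + 2) * (M:ℝ)) * (Dl - (L:ℝ)) := by
    have h := hsDl
    rw [hcL] at h
    rw [hNr] at h ⊢
    linear_combination -h
  have hNL : (0:ℝ) < (N:ℝ) - (L:ℝ) := by rw [hNr]; linarith [hKM0]
  have hgt1 : (L:ℝ) < Dl := by
    rw [hDl, lt_div_iff₀ hs, hcL, hNr]
    linarith [mul_pos hMLpos (show (0:ℝ) < ((K:ℝ) + 1) * (M:ℝ) + 1 + (l:ℝ) - (L:ℝ) by
      linarith [hKM0])]
  have hslope2 : (((K:ℝ) + 2) * (M:ℝ) - (((K:ℝ) + 1) * (M:ℝ) + (L:ℝ)))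
      * ((N:ℝ) - (((K:ℝ) + 1) * (M:ℝ) + (L:ℝ)))
      = (M:ℝ) * (((K:ℝ) + 2) * Dl - (((K:ℝ) + 1) * (M:ℝ) + (L:ℝ))) := by
    have h := hsDl
    rw [hcL] at h
    rw [hNr] at h ⊢
    linear_combination -h
  have hNL2 : (0:ℝ) < (N:ℝ) - (((K:ℝ) + 1) * (M:ℝ) + (L:ℝ)) := by rw [hNr]; linarith
  have hgt2 : ((K:ℝ) + 1) * (M:ℝ) + (L:ℝ) < ((K:ℝ) + 2) * Dl := by
    rw [hKDlval, lt_div_iff₀ hMpos, hcL, hNr]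
    linarith [mul_pos hMLpos hAux2]
  rcases eq_or_lt_of_le hrD with rfl | hlt
  · constructor
    · rw [dIC, if_pos (Or.inr le_rfl), hdenKM]
      linear_combination hsDl
    · rw [dIC, if_pos (Or.inr le_rfl), hdenKM]
      linear_combination hsDl
  · have hKr : ((K + 2 : ℕ) : ℝ) * r < ((K + 2 : ℕ) : ℝ) * Dl := by
      rw [hKc]; exact mul_lt_mul_of_pos_left hlt (by linarith)
    constructor
    · rw [dIC, if_neg (by push_neg; exact ⟨hDlpos, hlt⟩), hIdx1, hdenKM, hslope1,
        mul_div_assoc, div_self (ne_of_gt (sub_pos.2 hgt1)), mul_one]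
      linear_combination hsDl
    · rw [dIC, if_neg (by
          push_neg
          refine ⟨?_, hKr⟩
          rw [hKc]; linarith [mul_pos (show (0:ℝ) < (K:ℝ) + 2 by linarith) hDlpos]),
        hIdx2, hdenKM, hKMc, hKc, hL2r, hslope2,
        mul_div_assoc, div_self (ne_of_gt (sub_pos.2 hgt2)), mul_one]
      linear_combination hsDl
end

section
/- Let K ≥ 2, M ≥ 2 be integers, let l be an integer with 0 ≤ l ≤ 2M−3, and set N = (K−1)M+1+l. Set c_l = ⌊l/2⌋(⌊l/2⌋+1) + 2(⌊l/2⌋+1)(l/2 − ⌊l/2⌋) and d*(r) = MN − c_l − (N+M−1−l)·r. Then (i) d^{FC}_{M,N}(⌊l/2⌋+1) = d*(⌊l/2⌋+1), and (ii) d^{FC}_{KM,N}((K−1)M + ⌊(l+1)/2⌋) = d*( ((K−1)M + ⌊(l+1)/2⌋)/K ). -/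
/- Both identities are polynomial once two facts are in place: with `b = ⌊l/2⌋` one has
`c_l = (b+1)(l−b)` for either parity of `l`, and `N + M − 1 − l = KM`, so that the slope of `d*`
absorbs the factor `1/K` in (ii). Since `⌊(l+1)/2⌋ = l − b`, both evaluation points are
integers and `d^{FC}` is read off at its breakpoints. -/

lemma dFC_natCast (M N n : ℕ) : dFC M N n = ((M : ℝ) - n) * ((N : ℝ) - n) := by
  rw [dFC, Int.floor_natCast, Int.cast_natCast, sub_self, zero_mul, add_zero]

theorem stmt6_general (K M : ℕ) (hK : 2 ≤ K) (l : ℕ) :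
    let N : ℕ := (K - 1) * M + 1 + l
    let b : ℕ := l / 2
    let c : ℝ := (b : ℝ) * ((b : ℝ) + 1) + 2 * ((b : ℝ) + 1) * ((l : ℝ) / 2 - (b : ℝ))
    let dstar : ℝ → ℝ := fun r =>
      (M : ℝ) * (N : ℝ) - c - ((N : ℝ) + (M : ℝ) - 1 - (l : ℝ)) * r
    dFC M N ((b : ℝ) + 1) = dstar ((b : ℝ) + 1) ∧
    dFC (K * M) N ((((K - 1) * M + (l + 1) / 2 : ℕ) : ℝ))
      = dstar ((((K - 1) * M + (l + 1) / 2 : ℕ) : ℝ) / (K : ℝ)) := by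
  intro N b c dstar
  have hc : c = ((b : ℝ) + 1) * ((l : ℝ) - b) := by simp only [c]; ring
  have hN : (N : ℝ) = ((K : ℝ) - 1) * M + 1 + l := by
    simp only [N, Nat.cast_add, Nat.cast_mul, Nat.cast_one, Nat.cast_sub (by omega : 1 ≤ K)]
  have hpoint_eq : ((((K - 1) * M + (l + 1) / 2 : ℕ) : ℝ)) = ((K : ℝ) - 1) * M + l - b := by
    have hhalves : (l + 1) / 2 + b = l := by omega
    have hhalves_cast : (((l + 1) / 2 : ℕ) : ℝ) + b = l := by exact_mod_cast hhalves
    push_cast [Nat.cast_sub (by omega : 1 ≤ K)]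
    linarith
  have hK0 : (K : ℝ) ≠ 0 := Nat.cast_ne_zero.mpr (by omega)
  constructor
  · rw [← Nat.cast_add_one, dFC_natCast]
    simp only [dstar, hc, hN]
    push_cast
    ring
  · rw [dFC_natCast, hpoint_eq]
    simp only [dstar, hc, hN]
    push_cast
    field_simp
    ring

theorem stmt6 (K M : ℕ) (hK : 2 ≤ K) (hM : 2 ≤ M) (l : ℕ) (hl : l ≤ 2 * M - 3) :
    let N : ℕ := (K - 1) * M + 1 + l
    let b : ℕ := l / 2
    let c : ℝ := (b : ℝ) * ((b : ℝ) + 1) + 2 * ((b : ℝ) + 1) * ((l : ℝ) / 2 - (b : ℝ))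
    let dstar : ℝ → ℝ := fun r =>
      (M : ℝ) * (N : ℝ) - c - ((N : ℝ) + (M : ℝ) - 1 - (l : ℝ)) * r
    dFC M N ((b : ℝ) + 1) = dstar ((b : ℝ) + 1) ∧
    dFC (K * M) N ((((K - 1) * M + (l + 1) / 2 : ℕ) : ℝ))
      = dstar ((((K - 1) * M + (l + 1) / 2 : ℕ) : ℝ) / (K : ℝ)) :=
  stmt6_general K M hK l
end

section
/- Let M, N, K be positive integers with K ≥ 2 and N ≥ (K+1)M−1. Then for every real r with 0 ≤ r ≤ M, the supremum over tuples (D_1,…,D_K) of reals with 0 ≤ D_i ≤ M for each i and D_1+⋯+D_K ≤ min(N,KM), of the minimum over nonempty subsets A ⊆ {1,…,K} of d^{D_A}_{|A|M,N}(|A|·r) (where D_A = Σ_{a∈A} D_a), equals d^{FC}_{M,N}(r). -/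
open Finset

/-- The right end point of the `l`-th interval of `D` in the definition of `d^{D}_{M,N}`;
`lIdx M N D` is the least `l` with `D ≤ dimBreakpoint M N l`. -/
noncomputable def dimBreakpoint (M N l : ℕ) : ℝ :=
  ((M : ℝ) * (N : ℝ) - (l : ℝ) * ((l : ℝ) + 1)) / ((N : ℝ) + (M : ℝ) - 1 - 2 * (l : ℝ))

/-- The line through `(j, (M−j)(N−j))` and `(j+1, (M−j−1)(N−j−1))`, which is `d^{FC}_{M,N}` on
`[j, j+1]` for integral `j`. -/
def dFCLine (M N : ℕ) (j r : ℝ) : ℝ :=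
  (M - j) * (N - j) - (N + M - 1 - 2 * j) * (r - j)

section Breakpoints

variable {M N : ℕ} {D : ℝ}

lemma lIdx_le {l : ℕ} (h : D ≤ dimBreakpoint M N l) : lIdx M N D ≤ l :=
  Nat.sInf_le h

lemma le_dimBreakpoint_lIdx {l : ℕ} (h : D ≤ dimBreakpoint M N l) :
    D ≤ dimBreakpoint M N (lIdx M N D) :=
  Nat.sInf_mem (s := {l | D ≤ dimBreakpoint M N l}) ⟨l, h⟩

lemma dimBreakpoint_lt_of_lt_lIdx {l : ℕ} (h : l < lIdx M N D) : dimBreakpoint M N l < D :=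
  not_le.mp (Nat.notMem_of_lt_sInf h)

lemma le_dimBreakpoint_iff {l : ℕ} (hl : 0 < (N : ℝ) + M - 1 - 2 * l) :
    D ≤ dimBreakpoint M N l ↔ (D - l) * (N + M - 1 - 2 * l) ≤ (M - l) * (N - l) := by
  rw [dimBreakpoint, le_div_iff₀ hl]
  constructor <;> intro h <;> linarith

lemma dimBreakpoint_denom_pos {l : ℕ} (hlM : l + 1 ≤ M) (hMN : M ≤ N) :
    0 < (N : ℝ) + M - 1 - 2 * l := by
  have hlM' : (l : ℝ) + 1 ≤ M := by exact_mod_cast hlM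
  have hMN' : (M : ℝ) ≤ N := by exact_mod_cast hMN
  linarith

lemma add_one_le_dimBreakpoint {l : ℕ} (hlM : l + 1 ≤ M) (hMN : M ≤ N) :
    (l : ℝ) + 1 ≤ dimBreakpoint M N l := by
  have hlM' : (l : ℝ) + 1 ≤ M := by exact_mod_cast hlM
  have hMN' : (M : ℝ) ≤ N := by exact_mod_cast hMN
  rw [le_dimBreakpoint_iff (dimBreakpoint_denom_pos hlM hMN)]
  nlinarith

lemma dimBreakpoint_le {l : ℕ} (hlM : l + 1 ≤ M) (hMN : M ≤ N) : dimBreakpoint M N l ≤ M := by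
  have hlM' : (l : ℝ) + 1 ≤ M := by exact_mod_cast hlM
  rw [dimBreakpoint, div_le_iff₀ (dimBreakpoint_denom_pos hlM hMN)]
  nlinarith

end Breakpoints

section FiniteConstellation

variable (M N : ℕ)

lemma dFCLine_sub_dFCLine (j m r : ℝ) :
    dFCLine M N j r - dFCLine M N m r = (j - m) * (2 * r - j - m - 1) := by
  unfold dFCLine; ring

lemma dFC_eq_dFCLine_floor (r : ℝ) : dFC M N r = dFCLine M N ⌊r⌋ r := by
  unfold dFC dFCLine; ring

lemma dFCLine_le_dFC (j : ℤ) (r : ℝ) : dFCLine M N j r ≤ dFC M N r := by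
  have hfl := Int.floor_le r
  have hlt := Int.lt_floor_add_one r
  rw [dFC_eq_dFCLine_floor, ← sub_nonpos, dFCLine_sub_dFCLine]
  rcases lt_trichotomy j ⌊r⌋ with h | rfl | h
  · have h' : (j : ℝ) + 1 ≤ ⌊r⌋ := by exact_mod_cast h
    nlinarith
  · simp
  · have h' : (⌊r⌋ : ℝ) + 1 ≤ j := by exact_mod_cast h
    nlinarith

lemma dFC_eq_dFCLine {j : ℤ} {r : ℝ} (hjr : j ≤ r) (hrj : r ≤ j + 1) :
    dFC M N r = dFCLine M N j r := by
  rcases hrj.lt_or_eq with h | rfl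
  · rw [dFC_eq_dFCLine_floor, Int.floor_eq_iff.mpr ⟨hjr, h⟩]
  · rw [dFC_eq_dFCLine_floor, ← sub_eq_zero, dFCLine_sub_dFCLine]
    have : ⌊(j : ℝ) + 1⌋ = j + 1 := by simp
    rw [this]; push_cast; ring

lemma dFC_nonneg {M N : ℕ} (hMN : M ≤ N) {r : ℝ} (hr : r ≤ M) : 0 ≤ dFC M N r := by
  have hMN' : (M : ℝ) ≤ N := by exact_mod_cast hMN
  refine le_trans ?_ (dFCLine_le_dFC M N (M - 1) r)
  have : dFCLine M N ((M : ℤ) - 1 : ℤ) r = (N - M + 1) * (M - r) := by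
    push_cast; unfold dFCLine; ring
  rw [this]
  exact mul_nonneg (by linarith) (by linarith)

lemma dFCLine_eq_succ (j r : ℝ) :
    dFCLine M N j r = (M - (j + 1)) * (N - (j + 1)) - (N + M - 1 - 2 * j) * (r - (j + 1)) := by
  unfold dFCLine; ring

lemma dFCLine_eq_mul_sub_dimBreakpoint {l : ℕ} (hl : (N : ℝ) + M - 1 - 2 * l ≠ 0) (r : ℝ) :
    dFCLine M N l r = (N + M - 1 - 2 * l) * (dimBreakpoint M N l - r) := by
  rw [dimBreakpoint, mul_sub, mul_div_cancel₀ _ hl, dFCLine]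
  ring

end FiniteConstellation

section Chord

variable {v s D j r : ℝ}

lemma div_mul_sub_eq_sub (hjD : D ≠ j) : v / (D - j) * (D - r) = v - v / (D - j) * (r - j) := by
  field_simp [sub_ne_zero.2 hjD]
  ring

lemma div_mul_sub_le_of_le (hjD : D ≠ j) (hs : s ≤ v / (D - j)) (hjr : j ≤ r) :
    v / (D - j) * (D - r) ≤ v - s * (r - j) := by
  rw [div_mul_sub_eq_sub hjD]
  exact sub_le_sub_left (mul_le_mul_of_nonneg_right hs (sub_nonneg.2 hjr)) v

lemma div_mul_sub_le_of_ge (hjD : D ≠ j) (hs : v / (D - j) ≤ s) (hrj : r ≤ j) :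
    v / (D - j) * (D - r) ≤ v - s * (r - j) := by
  rw [div_mul_sub_eq_sub hjD]
  exact sub_le_sub_left (mul_le_mul_of_nonpos_right hs (sub_nonpos.2 hrj)) v

end Chord

section PointToPoint

variable {M N : ℕ} {D r : ℝ}

lemma dIC_of_pos_of_lt (hD : 0 < D) (hr : r < D) :
    dIC M N D r = (M - lIdx M N D) * (N - lIdx M N D) / (D - lIdx M N D) * (D - r) :=
  if_neg (not_or.2 ⟨hD.not_ge, hr.not_ge⟩)

lemma le_dimBreakpoint_pred (hM : 0 < M) (hMN : M ≤ N) (hDM : D ≤ M) :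
    D ≤ dimBreakpoint M N (M - 1) := by
  obtain ⟨m, rfl⟩ : ∃ m, M = m + 1 := Nat.exists_eq_add_one.2 hM
  have hmN : (m : ℝ) + 1 ≤ N := by exact_mod_cast hMN
  push_cast at hDM
  rw [Nat.add_sub_cancel, le_dimBreakpoint_iff (by push_cast; linarith)]
  push_cast
  nlinarith

theorem dIC_le_dFC (hMN : M ≤ N) (hDM : D ≤ M) (hr0 : 0 ≤ r) (hrM : r ≤ M) :
    dIC M N D r ≤ dFC M N r := by
  by_cases h : D ≤ 0 ∨ D ≤ r
  · rw [dIC, if_pos h]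
    exact dFC_nonneg hMN hrM
  obtain ⟨hD, hrD⟩ : 0 < D ∧ r < D := by simpa only [not_or, not_le] using h
  rw [dIC_of_pos_of_lt hD hrD]
  have hM : 0 < M := by exact_mod_cast hD.trans_le hDM
  have hbelow := le_dimBreakpoint_pred hM hMN hDM
  have hjM : lIdx M N D + 1 ≤ M := by
    have := lIdx_le hbelow
    omega
  set j := lIdx M N D
  rcases le_or_gt (j : ℝ) r with hjr | hrj
  · have hjD : (j : ℝ) < D := hjr.trans_lt hrD
    have hden := dimBreakpoint_denom_pos hjM hMN
    have hslope : (N : ℝ) + M - 1 - 2 * j ≤ (M - j) * (N - j) / (D - j) := by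
      rw [le_div_iff₀ (sub_pos.2 hjD), mul_comm]
      exact (le_dimBreakpoint_iff hden).1 (le_dimBreakpoint_lIdx hbelow)
    calc _ ≤ dFCLine M N j r := div_mul_sub_le_of_le hjD.ne' hslope hjr
      _ ≤ dFC M N r := by exact_mod_cast dFCLine_le_dFC M N j r
  · obtain ⟨i, hi⟩ : ∃ i, j = i + 1 := Nat.exists_eq_add_one.2 (by exact_mod_cast hr0.trans_lt hrj)
    have hbreak : dimBreakpoint M N i < D := dimBreakpoint_lt_of_lt_lIdx (by omega)
    have hjD : (i : ℝ) + 1 < D := lt_of_not_ge fun h =>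
      hbreak.not_ge (h.trans (add_one_le_dimBreakpoint (by omega) hMN))
    have hlt : (M - i) * (N - i) < (D - i) * ((N : ℝ) + M - 1 - 2 * i) :=
      not_le.1 ((le_dimBreakpoint_iff (dimBreakpoint_denom_pos (by omega) hMN)).not.1
        hbreak.not_ge)
    rw [hi] at hrj ⊢
    push_cast at hrj ⊢
    have hslope : (M - (i + 1)) * (N - (i + 1)) / (D - (i + 1)) ≤ (N : ℝ) + M - 1 - 2 * i := by
      rw [div_le_iff₀ (sub_pos.2 hjD)]
      linarith
    calc _ ≤ dFCLine M N i r := (dFCLine_eq_succ M N i r).symm ▸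
          div_mul_sub_le_of_ge hjD.ne' hslope hrj.le
      _ ≤ dFC M N r := by exact_mod_cast dFCLine_le_dFC M N i r

end PointToPoint

section MultipleAccess

variable {M N k l : ℕ}

lemma succ_mul_dimBreakpoint_le (hlM : l + 1 ≤ M) (hN : (k + 2) * M ≤ N + 1) :
    ((k : ℝ) + 1) * dimBreakpoint M N l ≤ dimBreakpoint ((k + 1) * M) N (k * M + l) := by
  have hlM' : (l : ℝ) + 1 ≤ M := by exact_mod_cast hlM
  have hN' : ((k : ℝ) + 2) * M ≤ N + 1 := by exact_mod_cast hN
  have hslack : 0 ≤ (N : ℝ) - 1 - 2 * l - k * M := by linarith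
  have hd : 0 < (N : ℝ) + M - 1 - 2 * l := by nlinarith
  have he : 0 < (N : ℝ) + ((k + 1) * M : ℕ) - 1 - 2 * (k * M + l : ℕ) := by push_cast; nlinarith
  rw [dimBreakpoint, dimBreakpoint, mul_div_assoc', div_le_div_iff₀ hd he]
  push_cast
  have hgap : 0 ≤ (k : ℝ) * ((M - l) * (M - l - 1)) * (N - 1 - 2 * l - k * M) :=
    mul_nonneg (mul_nonneg k.cast_nonneg (mul_nonneg (by linarith) (by linarith))) hslack
  linarith

lemma lt_succ_mul_dimBreakpoint (hlM : l + 1 ≤ M) (hN : (k + 2) * M ≤ N + 1) :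
    ((k * M + l : ℕ) : ℝ) < ((k : ℝ) + 1) * dimBreakpoint M N l := by
  have hlM' : (l : ℝ) + 1 ≤ M := by exact_mod_cast hlM
  have hN' : ((k : ℝ) + 2) * M ≤ N + 1 := by exact_mod_cast hN
  have hd : 0 < (N : ℝ) + M - 1 - 2 * l := by nlinarith
  rw [dimBreakpoint, mul_div_assoc', lt_div_iff₀ hd]
  push_cast
  have hgap : 0 < ((M : ℝ) - l) * (N - l - k * (M - 1 - l)) :=
    mul_pos (by linarith) (by nlinarith)
  linarith

theorem dFCLine_le_dIC_mul (hk : 0 < k) (hlM : l + 1 ≤ M) (hN : (k + 1) * M ≤ N + 1) (r : ℝ) :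
    dFCLine M N l r ≤ dIC (k * M) N (k * dimBreakpoint M N l) (k * r) := by
  obtain ⟨k, rfl⟩ : ∃ k', k = k' + 1 := Nat.exists_eq_add_one.2 hk
  have hlM' : (l : ℝ) + 1 ≤ M := by exact_mod_cast hlM
  have hN' : ((k : ℝ) + 2) * M ≤ N + 1 := by exact_mod_cast hN
  have hMN : M ≤ N := by nlinarith
  have hd := dimBreakpoint_denom_pos hlM hMN
  have hD := add_one_le_dimBreakpoint hlM hMN
  rw [dFCLine_eq_mul_sub_dimBreakpoint M N hd.ne']
  push_cast
  set D := dimBreakpoint M N l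
  by_cases hrD : D ≤ r
  · rw [dIC, if_pos (Or.inr (by gcongr))]
    exact mul_nonpos_of_nonneg_of_nonpos hd.le (sub_nonpos.2 hrD)
  rw [not_le] at hrD
  rw [dIC_of_pos_of_lt (mul_pos (by positivity) (by linarith)) (by gcongr)]
  have hbelow := succ_mul_dimBreakpoint_le hlM (by simpa using hN)
  set j := lIdx ((k + 1) * M) N ((k + 1) * D)
  have hjj₀ : j ≤ k * M + l := lIdx_le hbelow
  have hjj₀' : (j : ℝ) ≤ k * M + l := by exact_mod_cast hjj₀
  have hjD : (j : ℝ) < (k + 1) * D :=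
    (Nat.cast_le.2 hjj₀).trans_lt (lt_succ_mul_dimBreakpoint hlM (by simpa using hN))
  have hden : 0 < (N : ℝ) + ((k + 1) * M : ℕ) - 1 - 2 * j := by push_cast; nlinarith
  have hslope : (N : ℝ) + ((k + 1) * M : ℕ) - 1 - 2 * j ≤
      (((k + 1) * M : ℕ) - j) * (N - j) / ((k + 1) * D - j) := by
    rw [le_div_iff₀ (sub_pos.2 hjD), mul_comm]
    exact (le_dimBreakpoint_iff hden).1 (le_dimBreakpoint_lIdx hbelow)
  have hside : (N : ℝ) + M - 1 - 2 * l ≤ (k + 1) * ((N : ℝ) + ((k + 1) * M : ℕ) - 1 - 2 * j) := by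
    push_cast
    nlinarith
  calc (N + M - 1 - 2 * l) * (D - r)
      ≤ ((k + 1) * ((((k + 1) * M : ℕ) - j) * (N - j) / ((k + 1) * D - j))) * (D - r) := by
        gcongr
        exact hside.trans (by gcongr)
    _ = _ := by ring

end MultipleAccess

lemma csInf_setOf_le {ι α : Type*} [Finite ι] [ConditionallyCompleteLinearOrder α]
    {p : ι → Prop} (f : ι → α) {i : ι} (hi : p i) : sInf {y | ∃ a, p a ∧ y = f a} ≤ f i :=
  have : Nonempty α := ⟨f i⟩
  csInf_le ((Set.finite_range f).subset (by rintro _ ⟨a, -, rfl⟩; exact ⟨a, rfl⟩)).bddBelow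
    ⟨i, hi, rfl⟩

lemma le_csInf_setOf {ι α : Type*} [ConditionallyCompleteLattice α] {p : ι → Prop} {f : ι → α}
    {b : α} (hp : ∃ i, p i) (hb : ∀ i, p i → b ≤ f i) : b ≤ sInf {y | ∃ a, p a ∧ y = f a} :=
  le_csInf (let ⟨i, hi⟩ := hp; ⟨f i, i, hi, rfl⟩) (by rintro _ ⟨a, ha, rfl⟩; exact hb a ha)

lemma exists_nat_le_le_add_one {M : ℕ} (hM : 0 < M) {r : ℝ} (hr0 : 0 ≤ r) (hrM : r ≤ M) :
    ∃ l : ℕ, l + 1 ≤ M ∧ (l : ℝ) ≤ r ∧ r ≤ l + 1 := by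
  rcases hrM.lt_or_eq with h | rfl
  · exact ⟨⌊r⌋₊, (Nat.floor_lt hr0).2 h, Nat.floor_le hr0, (Nat.lt_floor_add_one r).le⟩
  · refine ⟨M - 1, by omega, ?_, ?_⟩ <;> rw [Nat.cast_pred hM] <;> linarith

theorem stmt7_general (M N K : ℕ) (hM : 0 < M) (hK : 2 ≤ K)
    (hNK : (K + 1) * M - 1 ≤ N)
    (r : ℝ) (hr0 : 0 ≤ r) (hrM : r ≤ (M : ℝ)) :
    sSup {x : ℝ | ∃ D : Fin K → ℝ,
        (∀ i, 0 ≤ D i ∧ D i ≤ (M : ℝ)) ∧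
        (∑ i, D i) ≤ min (N : ℝ) ((K : ℝ) * (M : ℝ)) ∧
        x = sInf {y : ℝ | ∃ A : Finset (Fin K), A.Nonempty ∧
              y = dIC (A.card * M) N (∑ a ∈ A, D a) ((A.card : ℝ) * r)}}
      = dFC M N r := by
  have : NeZero K := ⟨by omega⟩
  have hKN : (K + 1) * M ≤ N + 1 := by omega
  have hKMN : K * M ≤ N := by nlinarith
  have hMN : M ≤ N := le_trans (Nat.le_mul_of_pos_left M (by omega)) hKMN
  obtain ⟨l, hlM, hlr, hrl⟩ := exists_nat_le_le_add_one hM hr0 hrM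
  set Dopt := dimBreakpoint M N l
  have hfeas : (∀ _ : Fin K, 0 ≤ Dopt ∧ Dopt ≤ M) ∧ ∑ _ : Fin K, Dopt ≤ min (N : ℝ) (K * M) := by
    have hDM := dimBreakpoint_le hlM hMN
    have hKD : (K : ℝ) * Dopt ≤ K * M := by gcongr
    refine ⟨fun _ => ⟨by linarith [add_one_le_dimBreakpoint hlM hMN], hDM⟩, ?_⟩
    rw [sum_const, card_univ, Fintype.card_fin, nsmul_eq_mul]
    exact le_min (hKD.trans (by exact_mod_cast hKMN)) hKD
  have hopt : dFC M N r ≤ sInf {y : ℝ | ∃ A : Finset (Fin K), A.Nonempty ∧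
      y = dIC (A.card * M) N (∑ _ ∈ A, Dopt) ((A.card : ℝ) * r)} := by
    refine le_csInf_setOf ⟨univ, univ_nonempty⟩ fun A hA => ?_
    have hAK : (A.card + 1) * M ≤ N + 1 :=
      le_trans (Nat.mul_le_mul_right M (by simpa using card_le_univ A)) hKN
    rw [sum_const, nsmul_eq_mul, dFC_eq_dFCLine M N (j := l) (by simpa) (by simpa)]
    exact_mod_cast dFCLine_le_dIC_mul hA.card_pos hlM hAK r
  refine csSup_eq_of_forall_le_of_forall_lt_exists_gt ⟨_, _, hfeas.1, hfeas.2, rfl⟩ ?_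
    fun w hw => ⟨_, ⟨_, hfeas.1, hfeas.2, rfl⟩, hw.trans_le hopt⟩
  rintro _ ⟨D, hD, -, rfl⟩
  refine le_trans (csInf_setOf_le _ (singleton_nonempty 0)) ?_
  simpa using dIC_le_dFC hMN (hD 0).2 hr0 hrM

theorem stmt7 (M N K : ℕ) (hM : 0 < M) (hN : 0 < N) (hK : 2 ≤ K)
    (hNK : (K + 1) * M - 1 ≤ N)
    (r : ℝ) (hr0 : 0 ≤ r) (hrM : r ≤ (M : ℝ)) :
    sSup {x : ℝ | ∃ D : Fin K → ℝ,
        (∀ i, 0 ≤ D i ∧ D i ≤ (M : ℝ)) ∧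
        (∑ i, D i) ≤ min (N : ℝ) ((K : ℝ) * (M : ℝ)) ∧
        x = sInf {y : ℝ | ∃ A : Finset (Fin K), A.Nonempty ∧
              y = dIC (A.card * M) N (∑ a ∈ A, D a) ((A.card : ℝ) * r)}}
      = dFC M N r :=
  stmt7_general M N K hM hK hNK r hr0 hrM
end

section
/- Let M, N, K be positive integers with K ≥ 2 and N < (K−1)M+1. Then for every real r with 0 < r < N/K, one has M·N − K·M·r < d^{FC}_{K,M,N}(r). -/
theorem stmt10 (M N K : ℕ) (hM : 0 < M) (hN : 0 < N) (hK : 2 ≤ K)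
    (hNK : N < (K - 1) * M + 1)
    (r : ℝ) (hr0 : 0 < r) (hrN : r < (N : ℝ) / (K : ℝ)) :
    (M : ℝ) * (N : ℝ) - (K : ℝ) * (M : ℝ) * r < dFCmac K M N r := by
  have hKpos : (0:ℝ) < (K:ℝ) := by positivity
  -- N ≤ (K-1) M as reals
  have hNle : (N:ℝ) ≤ ((K:ℝ) - 1) * (M:ℝ) := by
    have h1 : N ≤ (K - 1) * M := Nat.lt_succ_iff.mp hNK
    have h2 : ((K - 1 : ℕ) : ℝ) = (K:ℝ) - 1 := by
      have : (1:ℕ) ≤ K := by omega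
      push_cast [Nat.cast_sub this]
      ring
    calc (N:ℝ) ≤ ((K-1:ℕ) * M : ℕ) := by exact_mod_cast h1
      _ = ((K:ℝ) - 1) * M := by push_cast [h2]; ring
  unfold dFCmac
  split_ifs with h
  · -- point-to-point regime
    unfold dFC
    set l : ℤ := ⌊r⌋ with hl
    have hl0 : (0:ℝ) ≤ (l:ℝ) := by
      have : (0:ℤ) ≤ l := Int.floor_nonneg.mpr hr0.le
      exact_mod_cast this
    have hlr : (l:ℝ) ≤ r := Int.floor_le r
    have hcase : (l:ℝ) = 0 ∨ (1:ℝ) ≤ (l:ℝ) := by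
      have hz : (0:ℤ) ≤ l := Int.floor_nonneg.mpr hr0.le
      have : l = 0 ∨ 1 ≤ l := by omega
      rcases this with h' | h'
      · left; exact_mod_cast h'
      · right; exact_mod_cast h'
    have hg : (0:ℝ) ≤ (l:ℝ) * (2 * r - (l:ℝ) - 1) := by
      rcases hcase with h' | h'
      · rw [h']; ring_nf; simp
      · have : (l:ℝ) - 1 ≤ 2 * r - (l:ℝ) - 1 := by nlinarith
        nlinarith
    have hKM : (M:ℝ) + (N:ℝ) - 1 < (K:ℝ) * M := by nlinarith
    have hident : (((M:ℝ)) - (l:ℝ)) * ((N:ℝ) - (l:ℝ)) + (r - (l:ℝ)) *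
        (((M:ℝ) - (l:ℝ) - 1) * ((N:ℝ) - (l:ℝ) - 1) - ((M:ℝ) - (l:ℝ)) * ((N:ℝ) - (l:ℝ)))
        = (M:ℝ) * (N:ℝ) - ((M:ℝ) + (N:ℝ) - 1) * r + (l:ℝ) * (2 * r - (l:ℝ) - 1) := by
      ring
    rw [hident]
    have := mul_pos (sub_pos.mpr hKM) hr0
    nlinarith
  · -- MAC regime
    set s : ℝ := (K:ℝ) * r with hs
    have hs0 : 0 < s := by positivity
    have hsN : s < (N:ℝ) := by
      rw [hs]
      calc (K:ℝ) * r < (K:ℝ) * ((N:ℝ) / (K:ℝ)) := by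
            exact (mul_lt_mul_iff_right₀ hKpos).mpr hrN
        _ = (N:ℝ) := by field_simp
    unfold dFC
    set l : ℤ := ⌊s⌋ with hl
    have hl0 : (0:ℝ) ≤ (l:ℝ) := by
      have : (0:ℤ) ≤ l := Int.floor_nonneg.mpr hs0.le
      exact_mod_cast this
    have hls : (l:ℝ) ≤ s := Int.floor_le s
    have hsl1 : s < (l:ℝ) + 1 := Int.lt_floor_add_one s
    have hlN : (l:ℝ) ≤ (N:ℝ) - 1 := by
      have h1 : l < (N:ℤ) := by
        have : (l:ℝ) < (N:ℝ) := lt_of_le_of_lt hls hsN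
        exact_mod_cast this
      have : (l:ℝ) + 1 ≤ (N:ℝ) := by exact_mod_cast h1
      linarith
    have hcase : (l:ℝ) = (N:ℝ) - 1 ∨ (l:ℝ) ≤ (N:ℝ) - 2 := by
      have h1 : l ≤ (N:ℤ) - 1 := by
        have : (l:ℝ) ≤ ((N:ℤ) - 1 : ℤ) := by push_cast; linarith
        exact_mod_cast this
      rcases eq_or_lt_of_le h1 with h' | h'
      · left; rw [h']; push_cast; ring
      · right
        have h2 : l ≤ (N:ℤ) - 2 := by omega
        have h3 : (l:ℝ) ≤ ((N:ℤ) - 2 : ℤ) := by exact_mod_cast h2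
        push_cast at h3; linarith
    have hg : (0:ℝ) ≤ ((N:ℝ) - (l:ℝ) - 1) * ((N:ℝ) + (l:ℝ) - 2 * s) := by
      rcases hcase with h' | h'
      · rw [h']; simp
      · have h1 : (0:ℝ) ≤ (N:ℝ) - (l:ℝ) - 1 := by linarith
        have h2 : (0:ℝ) ≤ (N:ℝ) + (l:ℝ) - 2 * s := by linarith
        positivity
    have hcast : ((K * M : ℕ) : ℝ) = (K:ℝ) * (M:ℝ) := by push_cast; ring
    rw [hcast]
    have hident : ((K:ℝ) * (M:ℝ) - (l:ℝ)) * ((N:ℝ) - (l:ℝ)) + (s - (l:ℝ)) *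
        (((K:ℝ) * (M:ℝ) - (l:ℝ) - 1) * ((N:ℝ) - (l:ℝ) - 1) - ((K:ℝ) * (M:ℝ) - (l:ℝ)) * ((N:ℝ) - (l:ℝ)))
        = ((K:ℝ) * (M:ℝ) - (N:ℝ) + 1) * ((N:ℝ) - s) + ((N:ℝ) - (l:ℝ) - 1) * ((N:ℝ) + (l:ℝ) - 2 * s) := by
      ring
    rw [hident]
    have hMs : (K:ℝ) * (M:ℝ) * r = (M:ℝ) * s := by rw [hs]; ring
    have hd : (0:ℝ) < ((K:ℝ) * (M:ℝ) - (N:ℝ) + 1 - (M:ℝ)) * ((N:ℝ) - s) :=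
      mul_pos (by nlinarith) (sub_pos.mpr hsN)
    nlinarith
end

section
/- Let K ≥ 2, M ≥ 2 be integers, let l be an integer with 0 ≤ l ≤ 2M−3, and set N = (K−1)M+1+l. Set c_l = ⌊l/2⌋(⌊l/2⌋+1) + 2(⌊l/2⌋+1)(l/2 − ⌊l/2⌋) and d*(r) = MN − c_l − (N+M−1−l)·r. Then for every real r with ⌊l/2⌋+1 < r < ((K−1)M+⌊(l+1)/2⌋)/K, one has d*(r) < d^{FC}_{K,M,N}(r). -/
private lemma intSq (m : ℤ) : 0 ≤ m * (m - 1) := by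
  rcases le_or_gt m 0 with h | h
  · nlinarith
  · nlinarith

set_option maxHeartbeats 1000000 in
theorem stmt11 (K M : ℕ) (hK : 2 ≤ K) (hM : 2 ≤ M) (l : ℕ) (hl : l ≤ 2 * M - 3) :
    let N : ℕ := (K - 1) * M + 1 + l
    let b : ℕ := l / 2
    let c : ℝ := (b : ℝ) * ((b : ℝ) + 1) + 2 * ((b : ℝ) + 1) * ((l : ℝ) / 2 - (b : ℝ))
    ∀ r : ℝ, (b : ℝ) + 1 < r →
      r < (((K - 1) * M + (l + 1) / 2 : ℕ) : ℝ) / (K : ℝ) →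
      (M : ℝ) * (N : ℝ) - c - ((N : ℝ) + (M : ℝ) - 1 - (l : ℝ)) * r
        < dFCmac K M N r := by
  intro N b c r hr1 hr2
  have hK1 : (1 : ℕ) ≤ K := by omega
  have hN : N = (K - 1) * M + 1 + l := rfl
  have hb : b = l / 2 := rfl
  have hc : c = (b : ℝ) * ((b : ℝ) + 1) + 2 * ((b : ℝ) + 1) * ((l : ℝ) / 2 - (b : ℝ)) := rfl
  have hbl : l ≤ 2 * b + 1 := by omega
  have hblR : (l : ℝ) ≤ 2 * (b : ℝ) + 1 := by exact_mod_cast hbl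
  have hNR : (N : ℝ) = ((K : ℝ) - 1) * (M : ℝ) + 1 + (l : ℝ) := by
    rw [hN]; push_cast [Nat.cast_sub hK1]; ring
  rw [dFCmac]
  split_ifs with hbr
  · -- first branch : r ≤ min (N/(K+1)) M
    rw [dFC]
    have hjle : (⌊r⌋ : ℝ) ≤ r := Int.floor_le r
    have hjgt : r < (⌊r⌋ : ℝ) + 1 := Int.lt_floor_add_one r
    have hjb : ((b : ℤ) + 1 : ℤ) ≤ ⌊r⌋ := by
      rw [Int.le_floor]; push_cast; linarith
    have hjbR : (b : ℝ) + 1 ≤ (⌊r⌋ : ℝ) := by exact_mod_cast hjb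
    have p1 : 0 < (2 * ((b : ℝ) + 1) - (l : ℝ)) * (r - ((b : ℝ) + 1)) :=
      mul_pos (by linarith) (by linarith)
    have p2 : 0 ≤ ((⌊r⌋ : ℝ) - ((b : ℝ) + 1)) * (r - (⌊r⌋ : ℝ)) :=
      mul_nonneg (by linarith) (by linarith)
    have p3 : 0 ≤ ((⌊r⌋ : ℝ) - ((b : ℝ) + 1)) * ((⌊r⌋ : ℝ) - ((b : ℝ) + 1) - 1) := by
      have h := intSq (⌊r⌋ - ((b : ℤ) + 1))
      have h' : (0 : ℝ) ≤ ((⌊r⌋ - ((b : ℤ) + 1) : ℤ) : ℝ) * (((⌊r⌋ - ((b : ℤ) + 1) : ℤ) : ℝ) - 1) := by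
        exact_mod_cast h
      push_cast at h'
      nlinarith [h']
    rw [hc]
    linarith [p1, p2, p3]
  · -- second branch : use dFC (K*M) N (K*r)
    rw [dFC]
    have hKpos : (0 : ℝ) < (K : ℝ) := by
      have : (0 : ℕ) < K := by omega
      exact_mod_cast this
    have haR : (((l + 1) / 2 : ℕ) : ℝ) = (l : ℝ) - (b : ℝ) := by
      have h1 : ((l + 1) / 2 : ℕ) + b = l := by omega
      have h2 : (((l + 1) / 2 : ℕ) : ℝ) + (b : ℝ) = (l : ℝ) := by exact_mod_cast h1
      linarith
    have haZ : (((l : ℤ) + 1) / 2 : ℤ) = (l : ℤ) - (b : ℤ) := by omega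
    have hJR : (((K - 1) * M + (l + 1) / 2 : ℕ) : ℝ)
        = ((K : ℝ) - 1) * (M : ℝ) + ((l : ℝ) - (b : ℝ)) := by
      push_cast [Nat.cast_sub hK1, haR]
      ring
    have hrJ : (K : ℝ) * r < ((K : ℝ) - 1) * (M : ℝ) + ((l : ℝ) - (b : ℝ)) := by
      rw [← hJR]
      have := (lt_div_iff₀ hKpos).mp hr2
      linarith
    have hfl : ⌊(K : ℝ) * r⌋ < (((K - 1) * M + (l + 1) / 2 : ℕ) : ℤ) := by
      rw [Int.floor_lt, Int.cast_natCast, hJR]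
      exact hrJ
    have hflR : (⌊(K : ℝ) * r⌋ : ℝ) + 1 ≤ ((K : ℝ) - 1) * (M : ℝ) + ((l : ℝ) - (b : ℝ)) := by
      have h1 : ⌊(K : ℝ) * r⌋ + 1 ≤ (((K - 1) * M + (l + 1) / 2 : ℕ) : ℤ) := by omega
      have h2 : ((⌊(K : ℝ) * r⌋ + 1 : ℤ) : ℝ)
          ≤ (((((K - 1) * M + (l + 1) / 2 : ℕ) : ℤ)) : ℝ) := Int.cast_le.mpr h1
      push_cast [Nat.cast_sub hK1, haR, haZ] at h2
      linarith
    have hjle : (⌊(K : ℝ) * r⌋ : ℝ) ≤ (K : ℝ) * r := Int.floor_le _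
    have hjgt : (K : ℝ) * r < (⌊(K : ℝ) * r⌋ : ℝ) + 1 := Int.lt_floor_add_one _
    have p1 : 0 < (((K : ℝ) - 1) * (M : ℝ) + ((l : ℝ) - (b : ℝ)) - (K : ℝ) * r)
        * (2 * (b : ℝ) + 2 - (l : ℝ)) :=
      mul_pos (by linarith) (by linarith)
    have p2 : 0 ≤ (((K : ℝ) - 1) * (M : ℝ) + ((l : ℝ) - (b : ℝ)) - 1 - (⌊(K : ℝ) * r⌋ : ℝ))
        * ((⌊(K : ℝ) * r⌋ : ℝ) + 1 - (K : ℝ) * r) :=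
      mul_nonneg (by linarith) (by linarith)
    have p3 : 0 ≤ (((K : ℝ) - 1) * (M : ℝ) + ((l : ℝ) - (b : ℝ)) - 1 - (⌊(K : ℝ) * r⌋ : ℝ))
        * (((K : ℝ) - 1) * (M : ℝ) + ((l : ℝ) - (b : ℝ)) - 2 - (⌊(K : ℝ) * r⌋ : ℝ)) := by
      have h := intSq ((((K - 1) * M + (l + 1) / 2 : ℕ) : ℤ) - 1 - ⌊(K : ℝ) * r⌋)
      have h' : ((0 : ℤ) : ℝ) ≤ ((((((K - 1) * M + (l + 1) / 2 : ℕ) : ℤ) - 1 - ⌊(K : ℝ) * r⌋)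
          * (((((K - 1) * M + (l + 1) / 2 : ℕ) : ℤ) - 1 - ⌊(K : ℝ) * r⌋) - 1) : ℤ) : ℝ) :=
        Int.cast_le.mpr h
      push_cast [Nat.cast_sub hK1, haR, haZ] at h'
      nlinarith [h']
    have hKM : ((K * M : ℕ) : ℝ) = (K : ℝ) * (M : ℝ) := by push_cast; ring
    rw [hc, hNR, hKM]
    linarith [p1, p2, p3]
end

section
/- Let s ≥ 1 be an integer and set M = s+1, N = 3s, L = min(3s, 2(s+1)). Let r_0 be a real with s < r_0 < s + 1/2, let ε be a real with 0 < ε < min(r_0 + r_0/s − 1, s + 1/2) − r_0, and set r_1 = r_0 + ε, r_2 = r_0 − ε. Then the supremum over pairs (D_1, D_2) of reals with 0 ≤ D_1 ≤ s+1, 0 ≤ D_2 ≤ s+1, and D_1+D_2 ≤ L, of min( d^{D_1}_{s+1,3s}(r_1), d^{D_2}_{s+1,3s}(r_2), d^{D_1+D_2}_{2(s+1),3s}(r_1+r_2) ), is strictly less than d^{FC}_{2(s+1),3s}(2·r_0). -/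
set_option maxHeartbeats 1000000




lemma pieceA (s k D : ℝ) (hs : 1 ≤ s) (hk0 : 0 ≤ k) (hk1 : k ≤ s - 1)
    (hD : D * (4*s - 2*k) ≤ 3*s*(s+1) - k*(k+1)) :
    (s+1-k)*(3*s-k)*(D-s) ≤ 2*s*(D-k) := by
  have hden : 0 < 4*s - 2*k := by linarith
  have hcoef : 0 ≤ (s+1-k)*(3*s-k) - 2*s := by nlinarith [mul_nonneg hk0 hk0]
  have hfact : (s*((s+1-k)*(3*s-k)) - 2*s*k)*(4*s-2*k) -
      ((s+1-k)*(3*s-k) - 2*s)*(3*s*(s+1) - k*(k+1))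
      = (s-k)*((s-k)-1)*((s-k)+1)*(2*s+(s-k)) := by ring
  have hfnn : 0 ≤ (s-k)*((s-k)-1)*((s-k)+1)*(2*s+(s-k)) := by
    have := mul_nonneg (mul_nonneg (mul_nonneg (by linarith : (0:ℝ) ≤ s-k)
      (by linarith : (0:ℝ) ≤ (s-k)-1)) (by linarith : (0:ℝ) ≤ (s-k)+1))
      (by linarith : (0:ℝ) ≤ 2*s+(s-k))
    linarith
  nlinarith [mul_le_mul_of_nonneg_left hD hcoef]

lemma pieceB (s k D : ℝ) (hs : 1 ≤ s) (hk0 : 0 ≤ k) (hk1 : k ≤ s - 2)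
    (hD : D * (4*s - 2*k) ≤ 3*s*(s+1) - k*(k+1)) :
    (s+1-k)*(3*s-k)*(D-(s-1)) ≤ 2*(2*s+1)*(D-k) := by
  have hden : 0 < 4*s - 2*k := by linarith
  have hcoef : 0 ≤ (s+1-k)*(3*s-k) - 2*(2*s+1) := by nlinarith [mul_nonneg hk0 hk0]
  have hfact : ((s-1)*((s+1-k)*(3*s-k)) - 2*(2*s+1)*k)*(4*s-2*k) -
      ((s+1-k)*(3*s-k) - 2*(2*s+1))*(3*s*(s+1) - k*(k+1))
      = ((s-k)+1)*(2*s+(s-k))*((s-k)-1)*((s-k)-2) := by ring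
  have hfnn : 0 ≤ ((s-k)+1)*(2*s+(s-k))*((s-k)-1)*((s-k)-2) := by
    have := mul_nonneg (mul_nonneg (mul_nonneg (by linarith : (0:ℝ) ≤ (s-k)+1)
      (by linarith : (0:ℝ) ≤ 2*s+(s-k))) (by linarith : (0:ℝ) ≤ (s-k)-1))
      (by linarith : (0:ℝ) ≤ (s-k)-2)
    linarith
  nlinarith [mul_le_mul_of_nonneg_left hD hcoef]

lemma cancel_aux (wv Ds Dr DK Q C : ℝ) (hDK : 0 < DK) (hDs : 0 < Ds) (hDr : 0 ≤ Dr)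
    (h : wv * DK < Q * Dr) (hP : Q * Ds ≤ C * DK) : wv * Ds < C * Dr := by
  have h1 := mul_lt_mul_of_pos_right h hDs
  have h2 := mul_le_mul_of_nonneg_right hP hDr
  have h3 : wv * Ds * DK < C * Dr * DK := by nlinarith
  exact lt_of_mul_lt_mul_right h3 hDK.le

lemma chan1 (s : ℕ) (hs : 1 ≤ s) (D r wv : ℝ) (hr : (s:ℝ) < r) (hD : D ≤ (s:ℝ)+1)
    (hw : 0 < wv) (h : wv < dIC (s+1) (3*s) D r) :
    wv * (D - (s:ℝ)) < 2*(s:ℝ)*(D - r) ∧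
      ((s:ℝ)*((s:ℝ)+2) < ((s:ℝ)+1)*D ∨ wv*(D-(s:ℝ)+1) < 2*(2*(s:ℝ)+1)*(D-r)) := by
  have hs' : (1:ℝ) ≤ (s:ℝ) := by exact_mod_cast hs
  unfold dIC at h
  split_ifs at h with hif
  · linarith
  push_neg at hif
  obtain ⟨hD0, hrD⟩ := hif
  -- membership of s in the defining set
  have hmemS : (s : ℕ) ∈ {l : ℕ |
      D ≤ (((s+1:ℕ) : ℝ) * ((3*s:ℕ) : ℝ) - (l : ℝ) * ((l : ℝ) + 1)) /
        (((3*s:ℕ) : ℝ) + ((s+1:ℕ) : ℝ) - 1 - 2 * (l : ℝ))} := by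
    show D ≤ _
    have heq : (((s+1:ℕ) : ℝ) * ((3*s:ℕ) : ℝ) - (s : ℝ) * ((s : ℝ) + 1)) /
        (((3*s:ℕ) : ℝ) + ((s+1:ℕ) : ℝ) - 1 - 2 * (s : ℝ)) = (s:ℝ)+1 := by
      push_cast
      rw [div_eq_iff (by linarith : (3*(s:ℝ) + ((s:ℝ)+1) - 1 - 2*(s:ℝ)) ≠ 0)]
      ring
    rw [heq]; exact hD
  have hlle : lIdx (s+1) (3*s) D ≤ s := Nat.sInf_le hmemS
  have hlmem : D ≤ (((s+1:ℕ) : ℝ) * ((3*s:ℕ) : ℝ) -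
      ((lIdx (s+1) (3*s) D : ℕ) : ℝ) * (((lIdx (s+1) (3*s) D : ℕ) : ℝ) + 1)) /
      (((3*s:ℕ) : ℝ) + ((s+1:ℕ) : ℝ) - 1 - 2 * ((lIdx (s+1) (3*s) D : ℕ) : ℝ)) :=
    Nat.sInf_mem (⟨s, hmemS⟩ : Set.Nonempty _)
  set l : ℕ := lIdx (s+1) (3*s) D with hldef
  set K : ℝ := (l : ℝ) with hKdef
  have hK0 : 0 ≤ K := Nat.cast_nonneg l
  have hKs : K ≤ (s:ℝ) := by rw [hKdef]; exact_mod_cast hlle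
  have hKD : K < D := lt_of_le_of_lt (le_trans hKs hr.le) hrD
  have hDr : 0 < D - r := by linarith
  have hDK : 0 < D - K := by linarith
  have hDs : 0 < D - (s:ℝ) := by linarith
  -- cleared value inequality
  push_cast at h
  rw [div_mul_eq_mul_div, lt_div_iff₀ hDK] at h
  -- h : wv * (D - K) < ((s+1) - K) * (3s - K) * (D - r)
  -- cleared membership
  have hpos4 : (0:ℝ) < 3*(s:ℝ) + ((s:ℝ)+1) - 1 - 2*K := by linarith
  push_cast at hlmem
  rw [le_div_iff₀ hpos4] at hlmem
  have hDg : D * (4*(s:ℝ) - 2*K) ≤ 3*(s:ℝ)*((s:ℝ)+1) - K*(K+1) := by nlinarith [hlmem]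
  rcases eq_or_lt_of_le hlle with hls | hls
  · -- l = s
    have hKeq : K = (s:ℝ) := by rw [hKdef, hls]
    constructor
    · rw [hKeq] at h; nlinarith [h]
    · left
      have hlt : s - 1 < lIdx (s+1) (3*s) D := by omega
      have hnm := Nat.notMem_of_lt_sInf hlt
      simp only [Set.mem_setOf_eq, not_le] at hnm
      have hcast : ((s-1:ℕ):ℝ) = (s:ℝ) - 1 := by
        push_cast [Nat.cast_sub hs]; ring
      rw [hcast] at hnm
      push_cast at hnm
      have hden2 : (0:ℝ) < 3*(s:ℝ) + ((s:ℝ)+1) - 1 - 2*((s:ℝ)-1) := by linarith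
      rw [div_lt_iff₀ hden2] at hnm
      nlinarith [hnm]
  · -- l ≤ s - 1
    have hK1 : K ≤ (s:ℝ) - 1 := by
      have : (l:ℝ) + 1 ≤ (s:ℝ) := by exact_mod_cast hls
      linarith
    have hPA := pieceA (s:ℝ) K D hs' hK0 hK1 hDg
    constructor
    · have := cancel_aux wv (D - (s:ℝ)) (D - r) (D - K) (((s:ℝ)+1-K)*(3*(s:ℝ)-K)) (2*(s:ℝ))
        hDK hDs hDr.le (by nlinarith [h]) (by nlinarith [hPA])
      linarith
    · right
      by_cases hls2 : l = s - 1
      · have hKeq : K = (s:ℝ) - 1 := by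
          rw [hKdef, hls2]
          push_cast [Nat.cast_sub hs]; ring
        rw [hKeq] at h
        nlinarith [h]
      · have hK2 : K ≤ (s:ℝ) - 2 := by
          have hl2 : l + 2 ≤ s := by omega
          have : (l:ℝ) + 2 ≤ (s:ℝ) := by exact_mod_cast hl2
          linarith
        have hPB := pieceB (s:ℝ) K D hs' hK0 hK2 hDg
        have := cancel_aux wv (D - ((s:ℝ)-1)) (D - r) (D - K) (((s:ℝ)+1-K)*(3*(s:ℝ)-K)) (2*(2*(s:ℝ)+1))
          hDK (by linarith) hDr.le (by nlinarith [h]) (by nlinarith [hPB])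
        linarith


lemma pieceC (s k S : ℝ) (hs : 1 ≤ s) (hk0 : 0 ≤ k) (hk1 : k ≤ 2*s)
    (hD : S * (5*s+1 - 2*k) ≤ 6*s^2+6*s - k*(k+1)) :
    (s+1)*S ≤ 2*s*(s+2) := by
  have hden : 0 < 5*s+1 - 2*k := by linarith
  have hid : 2*s*(s+2)*(5*s+1-2*k) - (s+1)*(6*s^2+6*s-k^2-k)
      = (1-3*s)*(k-2*s) + (s+1)*(k-2*s)^2 := by ring
  have h1 : 0 ≤ (1-3*s)*(k-2*s) := by nlinarith
  nlinarith [mul_le_mul_of_nonneg_left hD (by linarith : (0:ℝ) ≤ s+1), sq_nonneg (k-2*s)]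

lemma chanC (s : ℕ) (hs : 1 ≤ s) (S r wv : ℝ) (hr : 2*(s:ℝ) < r)
    (hS : S ≤ ((min (3*s) (2*(s+1)) : ℕ) : ℝ)) (hw : 0 < wv)
    (h : wv < dIC (2*(s+1)) (3*s) S r) :
    ((s:ℝ)+1)*S ≤ 2*(s:ℝ)*((s:ℝ)+2) ∨
      (2 ≤ s ∧ wv*(S - (2*(s:ℝ)+1)) < ((s:ℝ)-1)*(S - r)) := by
  have hs' : (1:ℝ) ≤ (s:ℝ) := by exact_mod_cast hs
  unfold dIC at h
  split_ifs at h with hif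
  · linarith
  push_neg at hif
  obtain ⟨hS0, hrS⟩ := hif
  have hSmin : S ≤ min (3*(s:ℝ)) (2*((s:ℝ)+1)) := by push_cast at hS; exact hS
  have hS3 : S ≤ 3*(s:ℝ) := hSmin.trans (min_le_left _ _)
  have hS2 : S ≤ 2*(s:ℝ)+2 := by
    have := hSmin.trans (min_le_right _ _); linarith
  set l : ℕ := lIdx (2*(s+1)) (3*s) S with hldef
  have hkey : Set.Nonempty {l : ℕ |
        S ≤ (((2*(s+1):ℕ) : ℝ) * ((3*s:ℕ) : ℝ) - (l : ℝ) * ((l : ℝ) + 1)) /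
          (((3*s:ℕ) : ℝ) + ((2*(s+1):ℕ) : ℝ) - 1 - 2 * (l : ℝ))} ∧
      (l ≤ 2*s ∨ (2 ≤ s ∧ l = 2*s+1)) := by
    rcases Nat.lt_or_ge s 2 with hs1 | hs2
    · have hseq : s = 1 := by omega
      subst hseq
      have hmem : (2 : ℕ) ∈ {l : ℕ |
          S ≤ (((2*(1+1):ℕ) : ℝ) * ((3*1:ℕ) : ℝ) - (l : ℝ) * ((l : ℝ) + 1)) /
            (((3*1:ℕ) : ℝ) + ((2*(1+1):ℕ) : ℝ) - 1 - 2 * (l : ℝ))} := by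
        show S ≤ _
        push_cast at hS3
        norm_num
        linarith [hS3]
      refine ⟨⟨2, hmem⟩, ?_⟩
      have hlle : lIdx (2*(1+1)) (3*1) S ≤ 2 := Nat.sInf_le hmem
      left; omega
    · have hmem : (2*s+1 : ℕ) ∈ {l : ℕ |
          S ≤ (((2*(s+1):ℕ) : ℝ) * ((3*s:ℕ) : ℝ) - (l : ℝ) * ((l : ℝ) + 1)) /
            (((3*s:ℕ) : ℝ) + ((2*(s+1):ℕ) : ℝ) - 1 - 2 * (l : ℝ))} := by
        show S ≤ _
        have hs2' : (2:ℝ) ≤ (s:ℝ) := by exact_mod_cast hs2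
        have heq : (((2*(s+1):ℕ) : ℝ) * ((3*s:ℕ) : ℝ) - ((2*s+1:ℕ) : ℝ) * (((2*s+1:ℕ) : ℝ) + 1)) /
            (((3*s:ℕ) : ℝ) + ((2*(s+1):ℕ) : ℝ) - 1 - 2 * ((2*s+1:ℕ) : ℝ)) = 2*(s:ℝ)+2 := by
          push_cast
          rw [div_eq_iff (by linarith : (3*(s:ℝ) + (2*((s:ℝ)+1)) - 1 - 2*(2*(s:ℝ)+1)) ≠ 0)]
          ring
        rw [heq]; exact hS2
      refine ⟨⟨2*s+1, hmem⟩, ?_⟩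
      have hlle : lIdx (2*(s+1)) (3*s) S ≤ 2*s+1 := Nat.sInf_le hmem
      by_cases hl2 : l = 2*s+1
      · exact Or.inr ⟨hs2, hl2⟩
      · left; omega
  obtain ⟨hne, hcase⟩ := hkey
  have hK0 : (0:ℝ) ≤ (l:ℝ) := Nat.cast_nonneg l
  rcases hcase with hl2s | ⟨hs2, hl2⟩
  · -- l ≤ 2s : use membership and pieceC
    left
    have hlmem : S ≤ (((2*(s+1):ℕ) : ℝ) * ((3*s:ℕ) : ℝ) - (l : ℝ) * ((l : ℝ) + 1)) /
        (((3*s:ℕ) : ℝ) + ((2*(s+1):ℕ) : ℝ) - 1 - 2 * (l : ℝ)) := Nat.sInf_mem hne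
    have hKs : (l:ℝ) ≤ 2*(s:ℝ) := by exact_mod_cast hl2s
    have hden : (0:ℝ) < ((3*s:ℕ) : ℝ) + ((2*(s+1):ℕ) : ℝ) - 1 - 2 * (l : ℝ) := by
      push_cast; linarith
    rw [le_div_iff₀ hden] at hlmem
    have hDg : S * (5*(s:ℝ)+1 - 2*(l:ℝ)) ≤ 6*(s:ℝ)^2+6*(s:ℝ) - (l:ℝ)*((l:ℝ)+1) := by
      push_cast at hlmem; nlinarith [hlmem]
    exact pieceC (s:ℝ) (l:ℝ) S hs' hK0 hKs hDg
  · -- l = 2s+1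
    right
    refine ⟨hs2, ?_⟩
    have hs2' : (2:ℝ) ≤ (s:ℝ) := by exact_mod_cast hs2
    have hlt : 2*s < lIdx (2*(s+1)) (3*s) S := by omega
    have hnm := Nat.notMem_of_lt_sInf hlt
    simp only [Set.mem_setOf_eq, not_le] at hnm
    have hden : (0:ℝ) < ((3*s:ℕ) : ℝ) + ((2*(s+1):ℕ) : ℝ) - 1 - 2 * ((2*s:ℕ) : ℝ) := by
      push_cast; linarith
    rw [div_lt_iff₀ hden] at hnm
    push_cast at hnm
    -- hnm : 6s^2+6s - 2s(2s+1) < S * (s+1)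
    have hSgt : 2*(s:ℝ)+1 < S := by nlinarith [hnm]
    have hKeq : ((l:ℕ):ℝ) = 2*(s:ℝ)+1 := by rw [hl2]; push_cast; ring
    rw [hKeq] at h
    push_cast at h
    rw [div_mul_eq_mul_div, lt_div_iff₀ (by linarith : (0:ℝ) < S - (2*(s:ℝ)+1))] at h
    nlinarith [h]


section numeric
variable (s t ε δ : ℝ)

lemma nBasic (hs : 1 ≤ s) (ht0 : 0 < t) (ht1 : t < 1) (hε0 : 0 < ε)
    (hεθ : 2*ε < 1-t) (hδ : 36*s*δ = ε*(2*s-(s+1)*t)*(1-t)) :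
    0 < 2*s-(s+1)*t ∧ 0 < δ ∧ 18*δ ≤ ε*(1-t) ∧ 36*δ ≤ 1-t := by
  have hθ0 : (0:ℝ) < 1 - t := by linarith
  have hs0 : (0:ℝ) < s := by linarith
  have hv0 : 0 < 2*s-(s+1)*t := by nlinarith
  have hδ0 : 0 < δ := by nlinarith [mul_pos (mul_pos hε0 hv0) hθ0]
  have hδεθ : 18*δ ≤ ε*(1-t) := by
    nlinarith [mul_nonneg (mul_nonneg hε0.le hθ0.le)
      (by nlinarith : (0:ℝ) ≤ (s+1)*t), hδ, hs0]
  have hδ1 : 36*δ ≤ 1-t := by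
    nlinarith [mul_nonneg (by linarith : (0:ℝ) ≤ 1/2 - ε) hθ0.le]
  exact ⟨hv0, hδ0, hδεθ, hδ1⟩

lemma nE (hs : 1 ≤ s) (ht0 : 0 < t) (ht1 : t < 1) (hε0 : 0 < ε)
    (hεθ : 2*ε < 1-t) (hδ : 36*s*δ = ε*(2*s-(s+1)*t)*(1-t)) :
    (s+1)^2*ε*(2*s-(s+1)*t) ≤
      (s+1)*(s*(t+2*ε))*((s+1)*(2+t)+δ) + (s+1)*((2*s+1)*(2+t-2*ε))*((s+1)*t+δ)
        - (3*s+1)*(((s+1)*t+δ)*((s+1)*(2+t)+δ)) := by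
  obtain ⟨hv0, hδ0, hδεθ, hδ1⟩ := nBasic s t ε δ hs ht0 ht1 hε0 hεθ hδ
  have hθ0 : (0:ℝ) < 1 - t := by linarith
  have hs0 : (0:ℝ) < s := by linarith
  have hε2 : ε ≤ 1/2 := by linarith
  have hX36 : 36*s*(δ*((s+1)*(3*s*t+2*s+t)) + 2*δ*ε*(s+1)^2 + (3*s+1)*δ^2)
      = ε*(2*s-(s+1)*t)*(1-t) * ((s+1)*(3*s*t+2*s+t) + 2*ε*(s+1)^2 + (3*s+1)*δ) := by
    linear_combination ((s+1)*(3*s*t+2*s+t) + 2*ε*(s+1)^2 + (3*s+1)*δ) * hδ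
  have hb1 : (s+1)*(3*s*t+2*s+t) ≤ 6*s*(s+1) := by nlinarith
  have hb2 : 2*ε*(s+1)^2 ≤ (s+1)^2 := by nlinarith [sq_nonneg (s+1)]
  have hb3 : (3*s+1)*δ ≤ (3*s+1)/36 := by nlinarith
  have hbr0 : (0:ℝ) ≤ (s+1)*(3*s*t+2*s+t) + 2*ε*(s+1)^2 + (3*s+1)*δ := by
    nlinarith [sq_nonneg (s+1)]
  have hbrk : (1-t) * ((s+1)*(3*s*t+2*s+t) + 2*ε*(s+1)^2 + (3*s+1)*δ) ≤ 36*s*(s+1)^2 := by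
    have m0 : (1-t) * ((s+1)*(3*s*t+2*s+t) + 2*ε*(s+1)^2 + (3*s+1)*δ)
        ≤ (s+1)*(3*s*t+2*s+t) + 2*ε*(s+1)^2 + (3*s+1)*δ := by
      nlinarith [mul_nonneg ht0.le hbr0]
    have m2 : 6*s*(s+1) + (s+1)^2 + (3*s+1)/36 ≤ 36*s*(s+1)^2 := by nlinarith
    linarith
  have hεv : (0:ℝ) ≤ ε*(2*s-(s+1)*t) := by positivity
  have h2 : 36*s*(δ*((s+1)*(3*s*t+2*s+t)) + 2*δ*ε*(s+1)^2 + (3*s+1)*δ^2)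
      ≤ 36*s*((s+1)^2*ε*(2*s-(s+1)*t)) := by
    linarith [mul_le_mul_of_nonneg_left hbrk hεv, hX36]
  have hX : δ*((s+1)*(3*s*t+2*s+t)) + 2*δ*ε*(s+1)^2 + (3*s+1)*δ^2
      ≤ (s+1)^2*ε*(2*s-(s+1)*t) :=
    le_of_mul_le_mul_left h2 (by linarith : (0:ℝ) < 36*s)
  linarith [hX]

lemma nC3 (hs : 1 ≤ s) (ht0 : 0 < t) (ht1 : t < 1) (hε0 : 0 < ε)
    (hεθ : 2*ε < 1-t) (hδ : 36*s*δ = ε*(2*s-(s+1)*t)*(1-t)) :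
    ((s+1)*(1-t)-δ)*((s+1)*t+δ) + (s+1)*((s-1)*(1-t))*((s+1)*t+δ)
      < (s+1)*((s+1)*(1-t)-δ)*(s*(t+2*ε)) := by
  obtain ⟨hv0, hδ0, hδεθ, hδ1⟩ := nBasic s t ε δ hs ht0 ht1 hε0 hεθ hδ
  have hθ0 : (0:ℝ) < 1 - t := by linarith
  have hs0 : (0:ℝ) < s := by linarith
  have hε2 : ε ≤ 1/2 := by linarith
  have hMm : (s+1)*(1-t)/2 ≤ (s+1)*(1-t)-δ := by nlinarith
  have hP : (s+1)*t+δ ≤ 2*(s+1) := by nlinarith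
  have hP0 : (0:ℝ) < (s+1)*t+δ := by nlinarith
  -- RHS bound
  have e1 : (s-1)*(δ*((s+1)*t+δ)) ≤ s*(δ*((s+1)*t+δ)) := by
    nlinarith [mul_pos hδ0 hP0]
  have e2 : δ*((s+1)*t+δ) ≤ δ*(2*(s+1)) := mul_le_mul_of_nonneg_left hP hδ0.le
  have e2s : s*(δ*((s+1)*t+δ)) ≤ s*(δ*(2*(s+1))) := by
    nlinarith [mul_le_mul_of_nonneg_left e2 hs0.le]
  have e4 : 18*(s*(δ*(2*(s+1)))) = (s+1)*(ε*(2*s-(s+1)*t)*(1-t)) := by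
    linear_combination (s+1)*hδ
  have e5 : (s+1)*(ε*(2*s-(s+1)*t)*(1-t)) ≤ (s+1)*(ε*(2*s)*(1-t)) := by
    nlinarith [mul_nonneg (mul_nonneg hε0.le hθ0.le) (by nlinarith : (0:ℝ) ≤ (s+1)*t)]
  have hR : (s-1)*(δ*((s+1)*t+δ)) ≤ s*(s+1)*(ε*(1-t))/9 := by linarith
  -- LHS bound
  have h2σεδ : (0:ℝ) ≤ 2*(s+1)*ε-δ := by nlinarith
  have hL : s*(3*ε)*((s+1)*(1-t)/2) ≤ s*(2*(s+1)*ε-δ)*((s+1)*(1-t)-δ) := by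
    have h1 : 3*ε ≤ 2*(s+1)*ε-δ := by nlinarith
    have := mul_le_mul h1 hMm (by positivity) h2σεδ
    linarith [mul_le_mul_of_nonneg_left this hs0.le]
  have hcore : s*(s+1)*(ε*(1-t))/9 < s*(3*ε)*((s+1)*(1-t)/2) := by
    have hpos : (0:ℝ) < s*((s+1)*(ε*(1-t))) :=
      mul_pos hs0 (mul_pos (by linarith) (mul_pos hε0 hθ0))
    linarith [hpos]
  linarith [hR, hL, hcore]

lemma nC4 (hs : 1 ≤ s) (ht0 : 0 < t) (ht1 : t < 1) (hε0 : 0 < ε)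
    (hεθ : 2*ε < 1-t) (hδ : 36*s*δ = ε*(2*s-(s+1)*t)*(1-t)) :
    2*(s+1)*(((s+1)*(1-t)-δ)*(((s+1)*t+δ)*((s+1)*(2+t)+δ)))
        + (s+1)*((s-1)*(1-t))*(((s+1)*t+δ)*((s+1)*(2+t)+δ))
      < (s+1)*(((s+1)*(1-t)-δ)*((s*(t+2*ε))*((s+1)*(2+t)+δ)
          + ((2*s+1)*(2+t-2*ε))*((s+1)*t+δ))) := by
  obtain ⟨hv0, hδ0, hδεθ, hδ1⟩ := nBasic s t ε δ hs ht0 ht1 hε0 hεθ hδ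
  have hθ0 : (0:ℝ) < 1 - t := by linarith
  have hs0 : (0:ℝ) < s := by linarith
  have hε2 : ε ≤ 1/2 := by linarith
  have hMm : (s+1)*(1-t)/2 ≤ (s+1)*(1-t)-δ := by nlinarith
  have hM0 : (0:ℝ) < (s+1)*(1-t)-δ := by nlinarith
  have hP : (s+1)*t+δ ≤ 2*(s+1) := by nlinarith
  have hQ : (s+1)*(2+t)+δ ≤ 4*(s+1) := by nlinarith
  have hP0 : (0:ℝ) < (s+1)*t+δ := by nlinarith
  have hQ0 : (0:ℝ) < (s+1)*(2+t)+δ := by nlinarith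
  have hE := nE s t ε δ hs ht0 ht1 hε0 hεθ hδ
  have h0 : (0:ℝ) ≤ (s+1)^2*ε*(2*s-(s+1)*t) := by positivity
  have hMmE : ((s+1)*(1-t)/2) * ((s+1)^2*ε*(2*s-(s+1)*t)) ≤
      ((s+1)*(1-t)-δ) * ((s+1)*(s*(t+2*ε))*((s+1)*(2+t)+δ)
        + (s+1)*((2*s+1)*(2+t-2*ε))*((s+1)*t+δ)
        - (3*s+1)*(((s+1)*t+δ)*((s+1)*(2+t)+δ))) := by
    linarith [mul_le_mul hMm hE h0 hM0.le]
  have hPQ : ((s+1)*t+δ)*((s+1)*(2+t)+δ) ≤ 8*(s+1)^2 := by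
    linarith [mul_le_mul hP hQ hQ0.le (by linarith : (0:ℝ) ≤ 2*(s+1))]
  have c1 : δ*(((s+1)*t+δ)*((s+1)*(2+t)+δ)) ≤ δ*(8*(s+1)^2) :=
    mul_le_mul_of_nonneg_left hPQ hδ0.le
  have c2 : (s-1)*(δ*(((s+1)*t+δ)*((s+1)*(2+t)+δ)))
      ≤ s*(δ*(((s+1)*t+δ)*((s+1)*(2+t)+δ))) := by
    nlinarith [mul_pos hδ0 (mul_pos hP0 hQ0)]
    
  have c3 : s*(δ*(((s+1)*t+δ)*((s+1)*(2+t)+δ))) ≤ s*(δ*(8*(s+1)^2)) := by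
    linarith [mul_le_mul_of_nonneg_left c1 hs0.le]
  have c4 : 9*(s*(δ*(8*(s+1)^2))) = 2*(s+1)^2*(ε*(2*s-(s+1)*t)*(1-t)) := by
    linear_combination 2*(s+1)^2*hδ
  have hR : (s-1)*(δ*(((s+1)*t+δ)*((s+1)*(2+t)+δ)))
      ≤ 2*(s+1)^2*(ε*(2*s-(s+1)*t)*(1-t))/9 := by linarith
  have hcore : 2*(s+1)^2*(ε*(2*s-(s+1)*t)*(1-t))/9 <
      ((s+1)*(1-t)/2) * ((s+1)^2*ε*(2*s-(s+1)*t)) := by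
    have hpos2 : (0:ℝ) < (s+1)^2*(ε*(2*s-(s+1)*t))*(1-t) := by
      have h1 := mul_pos (mul_pos (mul_pos (show (0:ℝ) < s+1 by linarith)
        (show (0:ℝ) < s+1 by linarith)) (mul_pos hε0 hv0)) hθ0
      nlinarith [h1]
    nlinarith [hpos2, mul_nonneg (by linarith : (0:ℝ) ≤ s-1) hpos2.le]
  linarith [hMmE, hR, hcore]

end numeric


theorem stmt14 (s : ℕ) (hs : 1 ≤ s) (r₀ ε : ℝ)
    (h1 : (s : ℝ) < r₀) (h2 : r₀ < (s : ℝ) + 1 / 2)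
    (hε0 : 0 < ε)
    (hε1 : ε < min (r₀ + r₀ / (s : ℝ) - 1) ((s : ℝ) + 1 / 2) - r₀) :
    sSup {x : ℝ | ∃ D₁ D₂ : ℝ,
        0 ≤ D₁ ∧ D₁ ≤ (s : ℝ) + 1 ∧ 0 ≤ D₂ ∧ D₂ ≤ (s : ℝ) + 1 ∧
        D₁ + D₂ ≤ ((min (3 * s) (2 * (s + 1)) : ℕ) : ℝ) ∧
        x = min (min (dIC (s + 1) (3 * s) D₁ (r₀ + ε))
                  (dIC (s + 1) (3 * s) D₂ (r₀ - ε)))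
              (dIC (2 * (s + 1)) (3 * s) (D₁ + D₂) ((r₀ + ε) + (r₀ - ε)))}
      < dFC (2 * (s + 1)) (3 * s) (2 * r₀) := by
  have hs' : (1:ℝ) ≤ (s:ℝ) := by exact_mod_cast hs
  have hs0 : (0:ℝ) < (s:ℝ) := by linarith
  have hσ0 : (0:ℝ) < (s:ℝ)+1 := by linarith
  -- unpack the ε hypothesis
  have hεmin : ε + r₀ < min (r₀ + r₀/(s:ℝ) - 1) ((s:ℝ) + 1/2) := by linarith
  have hεa : ε + r₀ < r₀ + r₀/(s:ℝ) - 1 := lt_of_lt_of_le hεmin (min_le_left _ _)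
  have hεb : ε + r₀ < (s:ℝ) + 1/2 := lt_of_lt_of_le hεmin (min_le_right _ _)
  have hεs : (s:ℝ)*ε < r₀ - (s:ℝ) := by
    have h' : ε + 1 < r₀/(s:ℝ) := by linarith
    have h'' := (lt_div_iff₀ hs0).mp h'
    nlinarith [h'']
  have ht0 : (0:ℝ) < 2*r₀ - 2*(s:ℝ) := by linarith
  have ht1 : 2*r₀ - 2*(s:ℝ) < 1 := by linarith
  have hεθ : 2*ε < 1 - (2*r₀ - 2*(s:ℝ)) := by linarith
  set δ : ℝ := ε*(2*(s:ℝ)-((s:ℝ)+1)*(2*r₀-2*(s:ℝ)))*(1-(2*r₀-2*(s:ℝ)))/(36*(s:ℝ)) with hδdef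
  have hδ36 : 36*(s:ℝ)*δ
      = ε*(2*(s:ℝ)-((s:ℝ)+1)*(2*r₀-2*(s:ℝ)))*(1-(2*r₀-2*(s:ℝ))) := by
    rw [hδdef]; field_simp
  obtain ⟨hv0, hδ0, hδεθ, hδ1⟩ :=
    nBasic (s:ℝ) (2*r₀-2*(s:ℝ)) ε δ hs' ht0 ht1 hε0 hεθ hδ36
  set w : ℝ := 2*(s:ℝ)-((s:ℝ)+1)*(2*r₀-2*(s:ℝ)) - δ with hwdef
  have hw0 : (0:ℝ) < w := by
    rw [hwdef]
    nlinarith [mul_nonneg (by linarith : (0:ℝ) ≤ (s:ℝ)-1)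
      (by linarith : (0:ℝ) ≤ 1-(2*r₀-2*(s:ℝ)))]
  -- the RHS equals v
  have hfl : ⌊2*r₀⌋ = (2*(s:ℤ)) := by
    rw [Int.floor_eq_iff]
    constructor
    · push_cast; linarith
    · push_cast; linarith
  have hdfc : dFC (2*(s+1)) (3*s) (2*r₀)
      = 2*(s:ℝ)-((s:ℝ)+1)*(2*r₀-2*(s:ℝ)) := by
    unfold dFC
    rw [hfl]
    push_cast
    ring
  have hkey : ∀ x ∈ {x : ℝ | ∃ D₁ D₂ : ℝ,
        0 ≤ D₁ ∧ D₁ ≤ (s : ℝ) + 1 ∧ 0 ≤ D₂ ∧ D₂ ≤ (s : ℝ) + 1 ∧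
        D₁ + D₂ ≤ ((min (3 * s) (2 * (s + 1)) : ℕ) : ℝ) ∧
        x = min (min (dIC (s + 1) (3 * s) D₁ (r₀ + ε))
                  (dIC (s + 1) (3 * s) D₂ (r₀ - ε)))
              (dIC (2 * (s + 1)) (3 * s) (D₁ + D₂) ((r₀ + ε) + (r₀ - ε)))}, x ≤ w := by
    rintro x ⟨D₁, D₂, hD₁0, hD₁, hD₂0, hD₂, hL, rfl⟩
    by_contra hcon
    push_neg at hcon
    have ha : w < dIC (s + 1) (3 * s) D₁ (r₀ + ε) :=
      hcon.trans_le ((min_le_left _ _).trans (min_le_left _ _))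
    have hb : w < dIC (s + 1) (3 * s) D₂ (r₀ - ε) :=
      hcon.trans_le ((min_le_left _ _).trans (min_le_right _ _))
    have hc : w < dIC (2 * (s + 1)) (3 * s) (D₁ + D₂) ((r₀ + ε) + (r₀ - ε)) :=
      hcon.trans_le (min_le_right _ _)
    have hr₁ : (s:ℝ) < r₀ + ε := by linarith
    have hr₂ : (s:ℝ) < r₀ - ε := by
      nlinarith [mul_nonneg (by linarith : (0:ℝ) ≤ (s:ℝ)-1) hε0.le]
    obtain ⟨hx1, -⟩ := chan1 s hs D₁ (r₀+ε) w hr₁ hD₁ hw0 ha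
    obtain ⟨-, hy2⟩ := chan1 s hs D₂ (r₀-ε) w hr₂ hD₂ hw0 hb
    have hcc := chanC s hs (D₁+D₂) ((r₀+ε)+(r₀-ε)) w (by linarith) hL hw0 hc
    rw [hwdef] at hx1 hy2 hcc
    -- conversions
    have h1' : (s:ℝ)*((2*r₀-2*(s:ℝ))+2*ε)
        < (D₁-(s:ℝ))*(((s:ℝ)+1)*(2*r₀-2*(s:ℝ))+δ) := by linarith [hx1]
    have hP0 : (0:ℝ) < ((s:ℝ)+1)*(2*r₀-2*(s:ℝ))+δ := by nlinarith
    have hQ0 : (0:ℝ) < ((s:ℝ)+1)*(2+(2*r₀-2*(s:ℝ)))+δ := by nlinarith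
    have hM0 : (0:ℝ) < ((s:ℝ)+1)*(1-(2*r₀-2*(s:ℝ)))-δ := by
      nlinarith [mul_nonneg (by linarith : (0:ℝ) ≤ (s:ℝ)-1)
        (by linarith : (0:ℝ) ≤ 1-(2*r₀-2*(s:ℝ)))]
    rcases hy2 with hyL | hyR <;> rcases hcc with hcL | ⟨-, hcR⟩
    · -- case LL
      have hδ2σε : δ < 2*((s:ℝ)+1)*ε := by
        nlinarith [mul_pos hε0 ht0,
          mul_nonneg (by linarith : (0:ℝ) ≤ (s:ℝ)-1) hε0.le]
      linarith [mul_lt_mul_of_pos_left h1' hσ0,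
        mul_lt_mul_of_pos_right hyL hP0,
        mul_le_mul_of_nonneg_right hcL hP0.le,
        mul_lt_mul_of_pos_left hδ2σε hs0]
    · -- case LR : hyL with hcR
      have hC3 := nC3 (s:ℝ) (2*r₀-2*(s:ℝ)) ε δ hs' ht0 ht1 hε0 hεθ hδ36
      have h3' : (D₁+D₂)*(((s:ℝ)+1)*(1-(2*r₀-2*(s:ℝ)))-δ)
          < (2*(s:ℝ)+1)*(((s:ℝ)+1)*(1-(2*r₀-2*(s:ℝ)))-δ)
            + ((s:ℝ)-1)*(1-(2*r₀-2*(s:ℝ))) := by linarith [hcR]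
      linarith [mul_lt_mul_of_pos_left h1' (mul_pos hσ0 hM0),
        mul_lt_mul_of_pos_right hyL (mul_pos hM0 hP0),
        mul_lt_mul_of_pos_left h3' (mul_pos hσ0 hP0),
        hC3]
    · -- case RL
      have hE := nE (s:ℝ) (2*r₀-2*(s:ℝ)) ε δ hs' ht0 ht1 hε0 hεθ hδ36
      have hE0 : (0:ℝ) < ((s:ℝ)+1)^2*ε*(2*(s:ℝ)-((s:ℝ)+1)*(2*r₀-2*(s:ℝ))) := by
        nlinarith [mul_pos (mul_pos (mul_pos hσ0 hσ0) hε0) hv0]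
      have h2' : (2*(s:ℝ)+1)*((2+(2*r₀-2*(s:ℝ)))-2*ε)
          < (D₂-(s:ℝ)+1)*(((s:ℝ)+1)*(2+(2*r₀-2*(s:ℝ)))+δ) := by linarith [hyR]
      linarith [mul_lt_mul_of_pos_left h1' (mul_pos hσ0 hQ0),
        mul_lt_mul_of_pos_left h2' (mul_pos hσ0 hP0),
        mul_le_mul_of_nonneg_right hcL (mul_pos hP0 hQ0).le,
        hE, hE0]
    · -- case RR
      have hC4 := nC4 (s:ℝ) (2*r₀-2*(s:ℝ)) ε δ hs' ht0 ht1 hε0 hεθ hδ36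
      have h2' : (2*(s:ℝ)+1)*((2+(2*r₀-2*(s:ℝ)))-2*ε)
          < (D₂-(s:ℝ)+1)*(((s:ℝ)+1)*(2+(2*r₀-2*(s:ℝ)))+δ) := by linarith [hyR]
      have h3' : (D₁+D₂)*(((s:ℝ)+1)*(1-(2*r₀-2*(s:ℝ)))-δ)
          < (2*(s:ℝ)+1)*(((s:ℝ)+1)*(1-(2*r₀-2*(s:ℝ)))-δ)
            + ((s:ℝ)-1)*(1-(2*r₀-2*(s:ℝ))) := by linarith [hcR]
      linarith [mul_lt_mul_of_pos_left h1' (mul_pos (mul_pos hσ0 hM0) hQ0),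
        mul_lt_mul_of_pos_left h2' (mul_pos (mul_pos hσ0 hM0) hP0),
        mul_lt_mul_of_pos_left h3' (mul_pos (mul_pos hσ0 hP0) hQ0),
        hC4]
  have hbound := Real.sSup_le hkey hw0.le
  rw [hdfc]
  calc sSup _ ≤ w := hbound
    _ < 2*(s:ℝ)-((s:ℝ)+1)*(2*r₀-2*(s:ℝ)) := by rw [hwdef]; linarith
end
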